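/- arXiv:2411.04523 — 8 statements merged into one kernel-verified Lean document; each statement's English description precedes it below -/
import Mathlib

section
/- Let X be a 0-dimensional T2 space and for each α < ω₁ let K_α be a nonempty closed nowhere dense subset of X with X = ⋃_{α<ω₁} K_α. For each α fix a maximal pairwise disjoint countable collection {U_{α,n} : n < ω} of clopen subsets of X contained in X \ K_α, set V_{α,n} = ⋃_{i≤n} U_{α,i} and W_α = ⋃_{n<ω} ({n} × V_{α,n}) ⊆ ω × X. Then the family {W_α : α < ω₁} of clopen subsets of ω × X is centered (every finite subfamily has nonempty intersection) and has empty intersection. -/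
open Set Topology TopologicalSpace

noncomputable def omega1 : Ordinal := (Cardinal.aleph 1).ord

/-- The family `{W_α : α < ω₁}` of clopen subsets of `ω × X` built from maximal
disjoint clopen families avoiding the nowhere dense sets `K_α` is centered and has
empty intersection. -/
theorem centered_empty_intersection {X : Type*} [TopologicalSpace X] [T2Space X]
    (h0 : IsTopologicalBasis {s : Set X | IsClopen s})
    (K : Ordinal → Set X)
    (hKne : ∀ α < omega1, (K α).Nonempty)
    (hKcl : ∀ α < omega1, IsClosed (K α))
    (hKnd : ∀ α < omega1, IsNowhereDense (K α))
    (hKcov : ∀ x : X, ∃ α < omega1, x ∈ K α)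
    (U : Ordinal → ℕ → Set X)
    (hUclopen : ∀ α < omega1, ∀ n : ℕ, IsClopen (U α n))
    (hUsub : ∀ α < omega1, ∀ n : ℕ, U α n ⊆ (K α)ᶜ)
    (hUdisj : ∀ α < omega1, ∀ m n : ℕ, m ≠ n → Disjoint (U α m) (U α n))
    (hUmax : ∀ α < omega1, ∀ V : Set X, IsClopen V → V ⊆ (K α)ᶜ → V.Nonempty →
      ∃ n : ℕ, (V ∩ U α n).Nonempty)
    (W : Ordinal → Set (ℕ × X))
    (hW : ∀ α : Ordinal, W α = ⋃ n : ℕ, ({n} : Set ℕ) ×ˢ (⋃ i ≤ n, U α i)) :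
    (∀ α < omega1, IsClopen (W α)) ∧
    (∀ F : Finset Ordinal, (∀ α ∈ F, α < omega1) → (⋂ α ∈ F, W α).Nonempty) ∧
    (⋂ α ∈ Set.Iio omega1, W α) = ∅ := by
  classical
  have h1pos : (0 : Ordinal) < omega1 := by
    rw [omega1, Cardinal.lt_ord]
    simpa using Cardinal.aleph_pos 1
  have hXne : Nonempty X := ⟨(hKne 0 h1pos).choose⟩
  have hVcl : ∀ α < omega1, ∀ n : ℕ, IsClopen (⋃ i ≤ n, U α i) := by
    intro α hα n
    have h : (⋃ i ≤ n, U α i) = ⋃ i ∈ Finset.Iic n, U α i := by simp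
    rw [h]
    exact isClopen_biUnion_finset fun i _ => hUclopen α hα i
  have hdense : ∀ α < omega1, Dense (⋃ n, U α n) := by
    intro α hα
    rw [dense_iff_inter_open]
    intro O hO hOne
    have hint : interior (K α) = ∅ := by
      have h := hKnd α hα
      rwa [IsNowhereDense, (hKcl α hα).closure_eq] at h
    have hO' : (O ∩ (K α)ᶜ).Nonempty := by
      by_contra h
      rw [not_nonempty_iff_eq_empty, ← Set.diff_eq, Set.diff_eq_empty] at h
      have := (hO.subset_interior_iff.2 h)
      rw [hint] at this
      exact hOne.ne_empty (Set.subset_empty_iff.1 this)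
    obtain ⟨x, hx⟩ := hO'
    obtain ⟨V, hVcl', hxV, hVsub⟩ :=
      h0.exists_subset_of_mem_open hx (hO.inter (hKcl α hα).isOpen_compl)
    obtain ⟨n, y, hy⟩ := hUmax α hα V hVcl'
      (hVsub.trans inter_subset_right) ⟨x, hxV⟩
    exact ⟨y, (hVsub hy.1).1, mem_iUnion.2 ⟨n, hy.2⟩⟩
  refine ⟨fun α hα => ?_, fun F hF => ?_, ?_⟩
  · rw [hW]
    constructor
    · rw [← isOpen_compl_iff]
      have h : (⋃ n, ({n} : Set ℕ) ×ˢ (⋃ i ≤ n, U α i))ᶜ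
          = ⋃ n, ({n} : Set ℕ) ×ˢ (⋃ i ≤ n, U α i)ᶜ := by
        ext ⟨m, x⟩
        simp only [mem_compl_iff, mem_iUnion, mem_prod, mem_singleton_iff, not_exists, not_and]
        constructor
        · intro h
          exact ⟨m, rfl, h m rfl⟩
        · rintro ⟨i, rfl, h⟩ j rfl
          exact h
      rw [h]
      exact isOpen_iUnion fun n => (isOpen_discrete _).prod (hVcl α hα n).compl.isOpen
    · exact isOpen_iUnion fun n => (isOpen_discrete _).prod (hVcl α hα n).isOpen
  · have hd : ∀ G : Finset Ordinal, (∀ α ∈ G, α < omega1) →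
        Dense (⋂ α ∈ G, ⋃ n, U α n) := by
      intro G
      induction G using Finset.induction with
      | empty => intro _; simp only [Finset.notMem_empty, iInter_of_empty, iInter_univ]; exact dense_univ
      | @insert a s ha ih =>
          intro h
          rw [Finset.set_biInter_insert]
          exact Dense.inter_of_isOpen_left
            (hdense a (h a (Finset.mem_insert_self a s)))
            (ih fun b hb => h b (Finset.mem_insert_of_mem hb))
            (isOpen_iUnion fun n => (hUclopen a (h a (Finset.mem_insert_self a s)) n).isOpen)
    obtain ⟨x, hx⟩ := (hd F hF).nonempty
    have hx' : ∀ α ∈ F, ∃ n, x ∈ U α n := fun α hα =>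
      mem_iUnion.1 (mem_iInter₂.1 hx α hα)
    choose! nf hnf using hx'
    refine ⟨(F.sup nf, x), mem_iInter₂.2 fun α hα => ?_⟩
    rw [hW]
    exact mem_iUnion.2 ⟨F.sup nf, rfl,
      mem_iUnion₂.2 ⟨nf α, Finset.le_sup hα, hnf α hα⟩⟩
  · rw [eq_empty_iff_forall_notMem]
    rintro ⟨n, x⟩ hmem
    obtain ⟨α, hα, hxK⟩ := hKcov x
    have h := mem_iInter₂.1 hmem α hα
    rw [hW] at h
    obtain ⟨m, hm⟩ := mem_iUnion.1 h
    obtain ⟨i, _, hxU⟩ := mem_iUnion₂.1 hm.2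
    exact hUsub α hα i hxU hxK
end

section
/- Let X be a 0-dimensional T2 space with an increasing ω₁-chain {K_α : α < ω₁} of nonempty closed nowhere dense subsets covering X, and let W_α ⊆ ω × X be the clopen sets defined from maximal disjoint clopen families avoiding K_α as in the L(X) construction. If S is a countable subset of ω × X, then there exists α < ω₁ with S ∩ W_α = ∅; consequently the point p in the one-point extension L(X) = (ω × X) ∪ {p}, whose neighborhood base consists of {p} ∪ W for finite intersections W of the W_α's, is not in the closure of any countable subset of ω × X. -/
open Set Topology TopologicalSpace

/-- If the closed nowhere dense sets `K_α` form an increasing ω₁-chain covering `X`,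
then every countable `S ⊆ ω × X` misses some `W_α`; consequently the extra point `p`
of `L(X)`, whose basic neighborhoods are `{p} ∪ W` for `W` a finite intersection of
`W_α`'s, is not in the closure of any countable subset of `ω × X`: some basic
neighborhood of `p` misses `S`. -/
theorem countable_misses_W {X : Type*} [TopologicalSpace X] [T2Space X]
    (h0 : IsTopologicalBasis {s : Set X | IsClopen s})
    (K : Ordinal → Set X)
    (hKne : ∀ α < omega1, (K α).Nonempty)
    (hKcl : ∀ α < omega1, IsClosed (K α))
    (hKnd : ∀ α < omega1, IsNowhereDense (K α))
    (hKmono : ∀ α β : Ordinal, α ≤ β → β < omega1 → K α ⊆ K β)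
    (hKcov : ∀ x : X, ∃ α < omega1, x ∈ K α)
    (U : Ordinal → ℕ → Set X)
    (hUclopen : ∀ α < omega1, ∀ n : ℕ, IsClopen (U α n))
    (hUsub : ∀ α < omega1, ∀ n : ℕ, U α n ⊆ (K α)ᶜ)
    (hUdisj : ∀ α < omega1, ∀ m n : ℕ, m ≠ n → Disjoint (U α m) (U α n))
    (hUmax : ∀ α < omega1, ∀ V : Set X, IsClopen V → V ⊆ (K α)ᶜ → V.Nonempty →
      ∃ n : ℕ, (V ∩ U α n).Nonempty)
    (W : Ordinal → Set (ℕ × X))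
    (hW : ∀ α : Ordinal, W α = ⋃ n : ℕ, ({n} : Set ℕ) ×ˢ (⋃ i ≤ n, U α i))
    (S : Set (ℕ × X)) (hS : S.Countable) :
    (∃ α < omega1, S ∩ W α = ∅) ∧
    (∃ F : Finset Ordinal, F.Nonempty ∧ (∀ α ∈ F, α < omega1) ∧
      S ∩ (⋂ α ∈ F, W α) = ∅) := by
  rcases S.eq_empty_or_nonempty with rfl | ⟨s₀, hs₀⟩
  · have h0lt : (0 : Ordinal) < omega1 :=
      Cardinal.isRegular_aleph_one.ord_pos
    refine ⟨⟨0, h0lt, by simp⟩, ⟨{0}, Finset.singleton_nonempty 0, ?_, by simp⟩⟩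
    intro α hα; simp at hα; simp [hα, h0lt]
  · obtain ⟨g, hg⟩ := hS.exists_surjective ⟨s₀, hs₀⟩
    choose f hf1 hf2 using fun s : S => hKcov (s.1).2
    set β := ⨆ n : ℕ, f (g n) with hβ
    have hβlt : β < omega1 := by
      rw [hβ, omega1]
      apply Cardinal.iSup_lt_ord_lift_of_isRegular Cardinal.isRegular_aleph_one
      · simpa using Cardinal.aleph0_lt_aleph_one
      · exact fun n => hf1 (g n)
    have hle : ∀ s : S, f s ≤ β := by
      intro s
      obtain ⟨n, rfl⟩ := hg s
      exact Ordinal.le_iSup (fun n => f (g n)) n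
    have hempty : S ∩ W β = ∅ := by
      ext z
      simp only [mem_inter_iff, mem_empty_iff_false, iff_false, not_and]
      intro hzS hzW
      rw [hW] at hzW
      rcases mem_iUnion.1 hzW with ⟨n, hn⟩
      rcases hn with ⟨hn1, hn2⟩
      rcases mem_iUnion₂.1 hn2 with ⟨i, hi, hzU⟩
      have hxK : z.2 ∈ K β :=
        hKmono (f ⟨z, hzS⟩) β (hle ⟨z, hzS⟩) hβlt (hf2 ⟨z, hzS⟩)
      exact hUsub β hβlt i hzU hxK
    refine ⟨⟨β, hβlt, hempty⟩, ⟨{β}, Finset.singleton_nonempty β, ?_, by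
      simpa using hempty⟩⟩
    intro α hα; simp at hα; simpa [hα] using hβlt
end

section
/- The one-point extension L(X) = (ω × X) ∪ {p}, where p has neighborhood base {{p} ∪ W : W a finite intersection of the sets W_α}, is a 0-dimensional Hausdorff topological space. -/
/-!
Each `W α` is clopen in `ω × X`, and every point `z` of `ω × X` misses some `W α`: its second
coordinate lies in some `K α`, which no `U α i` meets. Since `ω × X` sits in `L(X)` as an open
subspace, a clopen `D ∋ z` of `ω × X` inside the complement of `W α` stays clopen in `L(X)`, its
complement containing the basic neighbourhood `{p} ∪ W α`. The basic neighbourhoods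
`{p} ∪ ⋂ W α` of `p` are clopen as well. So `L(X)` has a clopen base; being `T₁`, it is then
totally separated, hence Hausdorff.
-/

open Set Topology TopologicalSpace

/-- `X` satisfies the countable chain condition. -/
def CCC (Y : Type*) [TopologicalSpace Y] : Prop :=
  ∀ 𝒰 : Set (Set Y), (∀ U ∈ 𝒰, IsOpen U ∧ U.Nonempty) → 𝒰.PairwiseDisjoint id →
    𝒰.Countable

/-- The topology of the one-point extension `L(X) = (ω × X) ∪ {p}`, with the extra
point `p` represented by `none`: a set `O` is open iff its trace on `ω × X` is open
and, in case `p ∈ O`, `O` contains `{p} ∪ W` for some finite intersection `W` of the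
sets `W_α` with `α < ω₁`. -/
def LTopology {X : Type*} [TopologicalSpace X] (W : Ordinal → Set (ℕ × X)) :
    TopologicalSpace (Option (ℕ × X)) where
  IsOpen O := IsOpen {z : ℕ × X | some z ∈ O} ∧
    (none ∈ O → ∃ F : Finset Ordinal, (∀ α ∈ F, α < omega1) ∧
      ∀ z : ℕ × X, (∀ α ∈ F, z ∈ W α) → some z ∈ O)
  isOpen_univ := ⟨isOpen_univ, fun _ => ⟨∅, by simp, fun _ _ => trivial⟩⟩
  isOpen_inter := by
    rintro s t ⟨hs1, hs2⟩ ⟨ht1, ht2⟩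
    refine ⟨hs1.inter ht1, fun hn => ?_⟩
    obtain ⟨F1, hF1, hF1'⟩ := hs2 hn.1
    obtain ⟨F2, hF2, hF2'⟩ := ht2 hn.2
    refine ⟨F1 ∪ F2, fun α hα => ?_, fun z hz => ?_⟩
    · rcases Finset.mem_union.1 hα with h | h
      exacts [hF1 α h, hF2 α h]
    · exact ⟨hF1' z fun α hα => hz α (Finset.mem_union_left _ hα),
        hF2' z fun α hα => hz α (Finset.mem_union_right _ hα)⟩
  isOpen_sUnion := by
    intro S hS
    constructor
    · have : {z : ℕ × X | some z ∈ ⋃₀ S} = ⋃ s ∈ S, {z : ℕ × X | some z ∈ s} := by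
        ext z; simp
      rw [this]
      exact isOpen_biUnion fun s hs => (hS s hs).1
    · rintro ⟨s, hsS, hns⟩
      obtain ⟨F, hF, hF'⟩ := (hS s hsS).2 hns
      exact ⟨F, hF, fun z hz => ⟨s, hsS, hF' z hz⟩⟩

section ZeroDimensional

variable {X Y : Type*} [TopologicalSpace X] [TopologicalSpace Y]

variable (X) in
theorem isTopologicalBasis_isClopen_of_discreteTopology [DiscreteTopology X] :
    IsTopologicalBasis {s : Set X | IsClopen s} :=
  (isTopologicalBasis_singletons X).of_isOpen_of_subset (fun _ hs => hs.isOpen)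
    fun _ _ => isClopen_discrete _

theorem TopologicalSpace.IsTopologicalBasis.prod_isClopen
    (hX : IsTopologicalBasis {s : Set X | IsClopen s})
    (hY : IsTopologicalBasis {s : Set Y | IsClopen s}) :
    IsTopologicalBasis {s : Set (X × Y) | IsClopen s} :=
  (hX.prod hY).of_isOpen_of_subset (fun _ hs => hs.isOpen) <| by
    rintro _ ⟨s, hs, t, ht, rfl⟩
    exact IsClopen.prod hs ht

theorem isOpen_iUnion_singleton_prod [DiscreteTopology X] {V : X → Set Y}
    (hV : ∀ i, IsOpen (V i)) : IsOpen (⋃ i, {i} ×ˢ V i) :=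
  isOpen_iUnion fun i => (isOpen_discrete _).prod (hV i)

theorem isClopen_iUnion_singleton_prod [DiscreteTopology X] {V : X → Set Y}
    (hV : ∀ i, IsClopen (V i)) : IsClopen (⋃ i, {i} ×ˢ V i) := by
  have hcompl : (⋃ i, {i} ×ˢ V i)ᶜ = ⋃ i, {i} ×ˢ (V i)ᶜ := by
    ext ⟨i, y⟩
    simp
  refine ⟨?_, isOpen_iUnion_singleton_prod fun i => (hV i).isOpen⟩
  rw [← isOpen_compl_iff, hcompl]
  exact isOpen_iUnion_singleton_prod fun i => (hV i).compl.isOpen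

end ZeroDimensional

-- A type synonym, so that `LTopology W` can be an instance; `p = none` is the extra point.
def LSpace {X : Type*} (_W : Ordinal → Set (ℕ × X)) : Type _ :=
  Option (ℕ × X)

namespace LSpace

variable {X : Type*} {W : Ordinal → Set (ℕ × X)}

def of : ℕ × X → LSpace W := some

def p : LSpace W := none

@[elab_as_elim]
theorem induction_on {motive : LSpace W → Prop} (x : LSpace W) (p : motive LSpace.p)
    (of : ∀ z, motive (LSpace.of z)) : motive x :=
  Option.rec p of x

theorem of_injective : Function.Injective (of : ℕ × X → LSpace W) :=
  fun _ _ => Option.some.inj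

@[simp]
theorem of_inj {z w : ℕ × X} : (of z : LSpace W) = of w ↔ z = w :=
  of_injective.eq_iff

@[simp]
theorem of_ne_p (z : ℕ × X) : (of z : LSpace W) ≠ p :=
  Option.some_ne_none z

theorem compl_image_of (C : Set (ℕ × X)) :
    (of '' C : Set (LSpace W))ᶜ = insert p (of '' Cᶜ) := by
  ext x
  induction x using induction_on with
  | p => simp
  | of z => simp

theorem preimage_of_insert_p_image (C : Set (ℕ × X)) :
    of ⁻¹' (insert p (of '' C) : Set (LSpace W)) = C := by
  ext z
  simp

variable [TopologicalSpace X]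

instance : TopologicalSpace (LSpace W) := LTopology W

theorem isOpen_iff {O : Set (LSpace W)} :
    IsOpen O ↔ IsOpen (of ⁻¹' O) ∧ (p ∈ O → ∃ F : Finset Ordinal,
      (∀ α ∈ F, α < omega1) ∧ ⋂ α ∈ F, W α ⊆ of ⁻¹' O) := by
  simp only [subset_def, mem_iInter₂]
  rfl

theorem isOpenEmbedding_of : IsOpenEmbedding (of : ℕ × X → LSpace W) := by
  refine .of_continuous_injective_isOpenMap
    (continuous_def.2 fun O hO => (isOpen_iff.1 hO).1) of_injective fun C hC => ?_
  refine isOpen_iff.2 ⟨by rwa [of_injective.preimage_image], fun hp => ?_⟩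
  simp at hp

theorem isOpen_insert_p_image {C : Set (ℕ × X)} (hC : IsOpen C) {F : Finset Ordinal}
    (hF : ∀ α ∈ F, α < omega1) (hFC : ⋂ α ∈ F, W α ⊆ C) :
    IsOpen (insert p (of '' C) : Set (LSpace W)) := by
  refine isOpen_iff.2 ⟨?_, fun _ => ⟨F, hF, ?_⟩⟩ <;> rwa [preimage_of_insert_p_image]

theorem isClosed_insert_p_image {C : Set (ℕ × X)} (hC : IsClosed C) :
    IsClosed (insert p (of '' C) : Set (LSpace W)) := by
  rw [← isOpen_compl_iff, ← compl_compl C, ← compl_image_of, compl_compl]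
  exact isOpenEmbedding_of.isOpenMap _ hC.isOpen_compl

theorem isClosed_image_of {C : Set (ℕ × X)} (hC : IsClosed C) {α : Ordinal} (hα : α < omega1)
    (hCW : Disjoint C (W α)) : IsClosed (of '' C : Set (LSpace W)) := by
  rw [← isOpen_compl_iff, compl_image_of]
  refine isOpen_insert_p_image hC.isOpen_compl (F := {α}) (by simpa) ?_
  simpa using hCW.subset_compl_left

theorem isClopen_image_of {C : Set (ℕ × X)} (hC : IsClopen C) {α : Ordinal} (hα : α < omega1)
    (hCW : Disjoint C (W α)) : IsClopen (of '' C : Set (LSpace W)) :=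
  ⟨isClosed_image_of hC.isClosed hα hCW, isOpenEmbedding_of.isOpenMap _ hC.isOpen⟩

theorem isClopen_insert_p_image_iInter (hW : ∀ α < omega1, IsClopen (W α)) {F : Finset Ordinal}
    (hF : ∀ α ∈ F, α < omega1) :
    IsClopen (insert p (of '' ⋂ α ∈ F, W α) : Set (LSpace W)) :=
  ⟨isClosed_insert_p_image (isClosed_biInter fun α hα => (hW α (hF α hα)).isClosed),
    isOpen_insert_p_image (isOpen_biInter_finset fun α hα => (hW α (hF α hα)).isOpen) hF
      subset_rfl⟩

theorem isTopologicalBasis_isClopen (hB : IsTopologicalBasis {s : Set (ℕ × X) | IsClopen s})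
    (hW : ∀ α < omega1, IsClopen (W α)) (hWcov : ∀ z, ∃ α < omega1, z ∉ W α) :
    IsTopologicalBasis {s : Set (LSpace W) | IsClopen s} := by
  refine isTopologicalBasis_of_isOpen_of_nhds (fun _ hs => hs.isOpen) fun x O hxO hO => ?_
  induction x using induction_on with
  | p =>
    obtain ⟨F, hF, hFO⟩ := (isOpen_iff.1 hO).2 hxO
    refine ⟨_, isClopen_insert_p_image_iInter hW hF, mem_insert _ _, ?_⟩
    exact insert_subset hxO (image_subset_iff.2 hFO)
  | of z =>
    obtain ⟨α, hα, hzα⟩ := hWcov z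
    obtain ⟨D, hD, hzD, hDO⟩ := hB.exists_subset_of_mem_open
      (show z ∈ of ⁻¹' O ∩ (W α)ᶜ from ⟨hxO, hzα⟩)
      ((isOpen_iff.1 hO).1.inter (hW α hα).isClosed.isOpen_compl)
    refine ⟨of '' D, isClopen_image_of hD hα ?_, mem_image_of_mem _ hzD, ?_⟩
    · exact disjoint_compl_left.mono_left (hDO.trans inter_subset_right)
    · exact image_subset_iff.2 (hDO.trans inter_subset_left)

theorem t1Space [T1Space X] (hWcov : ∀ z, ∃ α < omega1, z ∉ W α) : T1Space (LSpace W) := by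
  refine ⟨fun x => ?_⟩
  rw [← isOpen_compl_iff]
  induction x using induction_on with
  | p =>
    have hcompl : ({p} : Set (LSpace W))ᶜ = of '' univ := by
      rw [compl_eq_comm, compl_image_of, compl_univ, image_empty, insert_empty_eq]
    rw [hcompl]
    exact isOpenEmbedding_of.isOpenMap _ isOpen_univ
  | of z =>
    obtain ⟨α, hα, hzα⟩ := hWcov z
    rw [← image_singleton, compl_image_of]
    refine isOpen_insert_p_image isOpen_compl_singleton (F := {α}) (by simpa) ?_
    simpa

theorem t2Space [T1Space X] (hB : IsTopologicalBasis {s : Set (ℕ × X) | IsClopen s})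
    (hW : ∀ α < omega1, IsClopen (W α)) (hWcov : ∀ z, ∃ α < omega1, z ∉ W α) :
    T2Space (LSpace W) :=
  have := t1Space hWcov
  have := totallySeparatedSpace_of_t0_of_basis_clopen (isTopologicalBasis_isClopen hB hW hWcov)
  inferInstance

end LSpace

theorem LX_zero_dimensional_T2_general {X : Type*} [TopologicalSpace X] [T2Space X]
    (h0 : IsTopologicalBasis {s : Set X | IsClopen s})
    (K : Ordinal → Set X)
    (hKcov : ∀ x : X, ∃ α < omega1, x ∈ K α)
    (U : Ordinal → ℕ → Set X)
    (hUclopen : ∀ α < omega1, ∀ n : ℕ, IsClopen (U α n))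
    (hUsub : ∀ α < omega1, ∀ n : ℕ, U α n ⊆ (K α)ᶜ)
    (W : Ordinal → Set (ℕ × X))
    (hW : ∀ α : Ordinal, W α = ⋃ n : ℕ, ({n} : Set ℕ) ×ˢ (⋃ i ≤ n, U α i)) :
    @T2Space (Option (ℕ × X)) (LTopology W) ∧
    @IsTopologicalBasis (Option (ℕ × X)) (LTopology W)
      {s : Set (Option (ℕ × X)) | @IsClopen (Option (ℕ × X)) (LTopology W) s} := by
  have hWclopen : ∀ α < omega1, IsClopen (W α) := fun α hα => hW α ▸
    isClopen_iUnion_singleton_prod fun n =>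
      (finite_Iic n).isClopen_biUnion fun i _ => hUclopen α hα i
  have hWcov : ∀ z : ℕ × X, ∃ α < omega1, z ∉ W α := by
    intro z
    obtain ⟨α, hα, hzK⟩ := hKcov z.2
    refine ⟨α, hα, ?_⟩
    simp only [hW, mem_iUnion, mem_prod, mem_singleton_iff, not_exists, not_and]
    exact fun n _ i _ hi => hUsub α hα i hi hzK
  have hB := (isTopologicalBasis_isClopen_of_discreteTopology ℕ).prod_isClopen h0
  exact ⟨LSpace.t2Space hB hWclopen hWcov, LSpace.isTopologicalBasis_isClopen hB hWclopen hWcov⟩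

/-- The one-point extension `L(X)` is a 0-dimensional Hausdorff space. -/
theorem LX_zero_dimensional_T2 {X : Type*} [TopologicalSpace X] [T2Space X]
    (h0 : IsTopologicalBasis {s : Set X | IsClopen s})
    (hccc : CCC X)
    (K : Ordinal → Set X)
    (hKne : ∀ α < omega1, (K α).Nonempty)
    (hKcl : ∀ α < omega1, IsClosed (K α))
    (hKnd : ∀ α < omega1, IsNowhereDense (K α))
    (hKcov : ∀ x : X, ∃ α < omega1, x ∈ K α)
    (U : Ordinal → ℕ → Set X)
    (hUclopen : ∀ α < omega1, ∀ n : ℕ, IsClopen (U α n))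
    (hUsub : ∀ α < omega1, ∀ n : ℕ, U α n ⊆ (K α)ᶜ)
    (hUdisj : ∀ α < omega1, ∀ m n : ℕ, m ≠ n → Disjoint (U α m) (U α n))
    (hUmax : ∀ α < omega1, ∀ V : Set X, IsClopen V → V ⊆ (K α)ᶜ → V.Nonempty →
      ∃ n : ℕ, (V ∩ U α n).Nonempty)
    (W : Ordinal → Set (ℕ × X))
    (hW : ∀ α : Ordinal, W α = ⋃ n : ℕ, ({n} : Set ℕ) ×ˢ (⋃ i ≤ n, U α i)) :
    @T2Space (Option (ℕ × X)) (LTopology W) ∧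
    @IsTopologicalBasis (Option (ℕ × X)) (LTopology W)
      {s : Set (Option (ℕ × X)) | @IsClopen (Option (ℕ × X)) (LTopology W) s} :=
  LX_zero_dimensional_T2_general h0 K hKcov U hUclopen hUsub W hW
end

section
/- Let X be a compact Hausdorff hereditarily Lindelöf non-separable space. Then the union of all separable open subsets of X is separable, and removing it from X yields a nonempty compact hereditarily Lindelöf space in which every countable subset is nowhere dense (i.e., a nowhere separable space). -/
open Set Topology TopologicalSpace

/-- In a compact Hausdorff hereditarily Lindelöf non-separable space, the union `G`
of all separable open subsets is separable, and its complement is a nonempty compact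
hereditarily Lindelöf subspace in which every countable subset is nowhere dense. -/
theorem nowhere_separable_part {X : Type*} [TopologicalSpace X] [CompactSpace X]
    [T2Space X] [HereditarilyLindelofSpace X]
    (hns : ¬ SeparableSpace X)
    (G : Set X) (hG : G = ⋃₀ {U : Set X | IsOpen U ∧ IsSeparable U}) :
    IsSeparable G ∧ (Gᶜ).Nonempty ∧ IsCompact (Gᶜ) ∧
    HereditarilyLindelofSpace ↥(Gᶜ) ∧
    ∀ S : Set ↥(Gᶜ), S.Countable → IsNowhereDense S := by
  subst hG
  set F : Set (Set X) := {U : Set X | IsOpen U ∧ IsSeparable U} with hF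
  set G : Set X := ⋃₀ F with hGdef
  have hGopen : IsOpen G := isOpen_sUnion fun U hU => hU.1
  -- G is separable
  have hGsep : IsSeparable G := by
    have hLin : IsLindelof G := HereditarilyLindelof_LindelofSets G
    have hcov : G ⊆ ⋃ U : F, (U : Set X) := by
      intro x hx
      obtain ⟨U, hU, hxU⟩ := hx
      exact mem_iUnion.2 ⟨⟨U, hU⟩, hxU⟩
    obtain ⟨c, hc_count, hc_sub⟩ :=
      hLin.elim_countable_subcover (fun U : F => (U : Set X)) (fun U => U.2.1) hcov
    have : IsSeparable (⋃ U ∈ c, (U : Set X)) := by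
      rw [biUnion_eq_iUnion]
      have := hc_count.to_subtype
      exact isSeparable_iUnion.2 fun U => U.1.2.2
    exact this.mono hc_sub
  have hGcsep : ∀ V : Set X, IsOpen V → IsSeparable V → V ⊆ G :=
    fun V hVo hVs => subset_sUnion_of_mem ⟨hVo, hVs⟩
  -- complement nonempty
  have hne : (Gᶜ).Nonempty := by
    rw [nonempty_compl]
    intro h
    exact hns (isSeparable_univ_iff.1 (h ▸ hGsep))
  have hGc_closed : IsClosed (Gᶜ) := hGopen.isClosed_compl
  refine ⟨hGsep, hne, hGc_closed.isCompact, ?_, ?_⟩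
  · constructor
    intro t _
    rw [Subtype.isLindelof_iff]
    exact HereditarilyLindelof_LindelofSets _
  · intro S hS
    rw [IsNowhereDense]
    by_contra h
    obtain ⟨x, hx⟩ := nonempty_iff_ne_empty.2 h
    obtain ⟨t, hts, hto, hxt⟩ := mem_interior.1 hx
    obtain ⟨V, hVo, hVt⟩ := isOpen_induced_iff.1 hto
    have hclo : IsSeparable (closure (Subtype.val '' S)) :=
      ((hS.image _).isSeparable).closure
    have hVsep : IsSeparable V := by
      have : V ⊆ (V ∩ G) ∪ closure (Subtype.val '' S) := by
        intro y hy
        by_cases hyG : y ∈ G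
        · exact Or.inl ⟨hy, hyG⟩
        · refine Or.inr ?_
          have hyt : (⟨y, hyG⟩ : ↥(Gᶜ)) ∈ t := by
            rw [← hVt]; exact hy
          have := hts hyt
          rwa [IsEmbedding.subtypeVal.closure_eq_preimage_closure_image S] at this
      exact ((hGsep.mono inter_subset_right).union hclo).mono this
    have hVG : V ⊆ G := hGcsep V hVo hVsep
    have hxV : (x : X) ∈ V := by
      have : x ∈ t := hxt
      rw [← hVt] at this; exact this
    exact x.2 (hVG hxV)
end

section
/- If there exists a 0-dimensional compact Hausdorff hereditarily Lindelöf non-separable space, then there exists a σ-compact, hereditarily Lindelöf, 0-dimensional Hausdorff space that is not countably tight but in which the closure of every discrete subset is first countable. -/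
open Set Topology TopologicalSpace

/-- A space is countably tight if every point in the closure of a set is in the
closure of a countable subset of it. -/
def CountablyTight (Y : Type*) [TopologicalSpace Y] : Prop :=
  ∀ (A : Set Y) (y : Y), y ∈ closure A →
    ∃ C : Set Y, C ⊆ A ∧ C.Countable ∧ y ∈ closure C

/-- A 0-dimensional compact L-space: compact Hausdorff hereditarily Lindelöf,
non-separable, with a base of clopen sets. -/
def ZeroDimCompactLSpace (X : Type) [TopologicalSpace X] : Prop :=
  CompactSpace X ∧ T2Space X ∧ HereditarilyLindelofSpace X ∧ ¬ SeparableSpace X ∧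
    IsTopologicalBasis {s : Set X | IsClopen s}

/-- A σ-compact, hereditarily Lindelöf, 0-dimensional Hausdorff space that is not
countably tight but in which the closure of every discrete subset is first
countable. -/
def TkachukCounterexample (Y : Type) [TopologicalSpace Y] : Prop :=
  SigmaCompactSpace Y ∧ HereditarilyLindelofSpace Y ∧ T2Space Y ∧
    IsTopologicalBasis {s : Set Y | IsClopen s} ∧ ¬ CountablyTight Y ∧
    ∀ D : Set Y, DiscreteTopology ↥D → FirstCountableTopology ↥(closure D)

/-
Inside a 0-dimensional compact L-space one finds a nonempty closed subspace `Z` that is the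
union of an increasing `ω₁`-chain of closed nowhere dense sets `c α`: remove the open part that
is covered by closures of countable sets, and in what is left build countable sets `S α` each of
which puts, near every earlier point, a point outside the closure of the earlier stages
(first countability makes this a countable task). Then `Z` is the closure of their union and
`c α = closure (S α)`: these cover `Z` because every countable set of stages is bounded below
`ω₁`, and are nowhere dense in `Z` because later stages avoid them.
Diagonalising along the chain gives an `ω₁`-tower of sequences of nonempty clopen sets
`T α n ⊆ Z \ c α`, decreasing modulo finitely many `n`. The space is `ω × Z` with one point `p`
added whose neighbourhoods are generated by the sets `{(n, z) | m ≤ n, z ∈ T α n}`. A countable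
subset of `ω × Z` lies in `ω × c α` for some `α`, hence misses such a neighbourhood: `p` is in
the closure of `ω × Z` but not of any countable part of it, so the space is not countably tight.
A discrete set is countable away from `p` by hereditary Lindelöfness, so `p` is isolated in its
closure, and all other points are first countable as in `Z`.
-/

open Filter

theorem WellFoundedLT.exists_forall_of_extend {W β : Type*} [LT W] [WellFoundedLT W]
    [Nonempty β] (Q : W → β → Prop) (R : β → β → Prop)
    (h : ∀ w (f : W → β), (∀ v < w, Q v (f v) ∧ ∀ u < v, R (f v) (f u)) →
      ∃ b, Q w b ∧ ∀ v < w, R b (f v)) :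
    ∃ f : W → β, ∀ w, Q w (f w) ∧ ∀ v < w, R (f w) (f v) := by
  let f : W → β := wellFounded_lt.fix fun w g =>
    Classical.epsilon fun b => Q w b ∧ ∀ v (hv : v < w), R b (g v hv)
  have hf (w : W) : f w = Classical.epsilon fun b => Q w b ∧ ∀ v < w, R b (f v) :=
    wellFounded_lt.fix_eq _ w
  refine ⟨f, fun w => ?_⟩
  induction w using WellFoundedLT.induction with
  | ind w ih =>
    rw [hf]
    exact Classical.epsilon_spec (h w f ih)

theorem Nat.exists_tendsto_atTop_eventually {P : ℕ → ℕ → Prop}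
    (h : ∀ k, ∀ᶠ n in atTop, P k n) :
    ∃ g : ℕ → ℕ, Tendsto g atTop atTop ∧ ∀ᶠ n in atTop, P (g n) n := by
  classical
  choose N hN using fun k => eventually_atTop.1 (h k)
  refine ⟨fun n => Nat.findGreatest (fun k => N k ≤ n) n, tendsto_atTop.2 fun k => ?_, ?_⟩
  · filter_upwards [eventually_ge_atTop (max k (N k))] with n hn
    exact Nat.le_findGreatest (le_of_max_le_left hn) (le_of_max_le_right hn)
  · filter_upwards [eventually_ge_atTop (N 0)] with n hn
    exact hN _ _ (Nat.findGreatest_spec (P := fun k => N k ≤ n) (zero_le n) hn)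

theorem exists_eventually_le_of_countable {P α : Type*} [Preorder P] [IsDirectedOrder P]
    [Nonempty P] [Countable P] [Preorder α] (S : P → ℕ → α)
    (hS : ∀ p q, p ≤ q → ∀ᶠ n in atTop, S q n ≤ S p n) :
    ∃ f : ℕ → P, ∀ p, ∀ᶠ n in atTop, S (f n) n ≤ S p n := by
  obtain ⟨β, hβ, hβtop⟩ := exists_seq_monotone_tendsto_atTop_atTop P
  obtain ⟨g, hg, hgS⟩ := Nat.exists_tendsto_atTop_eventually
    (P := fun k n => ∀ j ∈ Iic k, S (β k) n ≤ S (β j) n)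
    fun k => (finite_Iic k).eventually_all.2 fun j hj => hS _ _ (hβ hj)
  refine ⟨β ∘ g, fun p => ?_⟩
  obtain ⟨k, hk⟩ := (hβtop.eventually_ge_atTop p).exists
  filter_upwards [hg.eventually_ge_atTop k, hgS, hS p (β k) hk] with n hkn hn hpn
  exact (hn k hkn).trans hpn

open Ordinal in
abbrev Omega1 : Type 1 := Iio (ω₁ : Ordinal.{0})

namespace Omega1

open Cardinal Ordinal

theorem countable_Iio (w : Omega1) : (Iio w).Countable := by
  have : (Iio w.1).Countable := by
    rw [← le_aleph0_iff_set_countable, Cardinal.mk_Iio_ordinal, lift_le_aleph0,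
      ← lt_aleph_one_iff, ← lt_omega_iff_card_lt]
    exact w.2
  exact this.preimage Subtype.val_injective

theorem bddAbove_of_countable (s : Set Omega1) (hs : s.Countable) : BddAbove s := by
  have := hs.to_subtype
  exact ⟨⟨⨆ x : s, x.1.1, iSup_lt_omega_one fun x => x.1.2⟩,
    fun x hx => Ordinal.le_iSup (fun x : s => x.1.1) ⟨x, hx⟩⟩

instance : NoMaxOrder Omega1 :=
  ⟨fun w => ⟨⟨Order.succ w.1, (isSuccLimit_omega 1).succ_lt w.2⟩, Order.lt_succ w.1⟩⟩

instance : Nonempty Omega1 := ⟨⟨0, omega_pos 1⟩⟩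

end Omega1

theorem Topology.IsInducing.isTopologicalBasis_isClopen {X Y : Type*} [TopologicalSpace X]
    [TopologicalSpace Y] {f : Y → X} (hf : IsInducing f)
    (hX : IsTopologicalBasis {s : Set X | IsClopen s}) :
    IsTopologicalBasis {s : Set Y | IsClopen s} :=
  (hX.isInducing hf).of_isOpen_of_subset (fun _ h => h.isOpen)
    (image_subset_iff.2 fun _ hs => hs.preimage hf.continuous)

section Sigma

variable {ι : Type*} {E : ι → Type*} [∀ i, TopologicalSpace (E i)]

instance [Countable ι] [∀ i, HereditarilyLindelofSpace (E i)] :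
    HereditarilyLindelofSpace (Σ i, E i) := by
  refine ⟨fun t _ => ?_⟩
  rw [← iUnion_image_preimage_sigma_mk_eq_self t]
  exact isLindelof_iUnion fun i =>
    (HereditarilyLindelofSpace.isLindelof _).image continuous_sigmaMk

instance [∀ i, FirstCountableTopology (E i)] : FirstCountableTopology (Σ i, E i) :=
  ⟨fun ⟨i, x⟩ => by rw [Sigma.nhds_mk]; infer_instance⟩

theorem isTopologicalBasis_isClopen_sigma
    (h : ∀ i, IsTopologicalBasis {s : Set (E i) | IsClopen s}) :
    IsTopologicalBasis {s : Set (Σ i, E i) | IsClopen s} := by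
  refine (IsTopologicalBasis.sigma h).of_isOpen_of_subset (fun _ h => h.isOpen) ?_
  simp only [iUnion_subset_iff, image_subset_iff]
  exact fun i s hs => ⟨isClosedMap_sigmaMk _ hs.isClosed, isOpenMap_sigmaMk _ hs.isOpen⟩

end Sigma

section Topology

variable {X : Type*} [TopologicalSpace X]

theorem firstCountableTopology_of_hereditarilyLindelof [CompactSpace X] [T2Space X]
    [HereditarilyLindelofSpace X] : FirstCountableTopology X := by
  -- `{x}` is a countable intersection of closed neighbourhoods, and by compactness their finite
  -- intersections form a basis of `𝓝 x`.
  refine ⟨fun x => ?_⟩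
  have : Nonempty {s : Set X // s ∈ 𝓝 x ∧ IsClosed s} := ⟨⟨univ, univ_mem, isClosed_univ⟩⟩
  obtain ⟨k, hk⟩ := eq_closed_inter_nat (fun s : {s : Set X // s ∈ 𝓝 x ∧ IsClosed s} => s.1)
    fun s => s.2.2
  have hx : ⋂ n, (k n : Set X) = {x} := by
    rw [hk, ← biInter_basis_nhds (closed_nhds_basis x), iInter_subtype]
    rfl
  suffices 𝓝 x = ⨅ n, 𝓟 (k n : Set X) from this ▸ isCountablyGenerated_seq _
  refine le_antisymm (le_iInf fun n => le_principal_iff.2 (k n).2.1) fun U hU => ?_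
  have hU' : ∀ y ∈ ⋂ s : Finset ℕ, ⋂ n ∈ s, (k n : Set X), U ∈ 𝓝 y := fun y hy => by
    have : y ∈ ⋂ n, (k n : Set X) := mem_iInter.2 fun n => by simpa using mem_iInter.1 hy {n}
    rw [hx, mem_singleton_iff] at this
    exact this ▸ hU
  obtain ⟨s, hs⟩ := exists_subset_nhds_of_isCompact
    (fun s t => ⟨s ∪ t, biInter_subset_biInter_left fun n => by simp +contextual,
      biInter_subset_biInter_left fun n => by simp +contextual⟩)
    (fun s => (isClosed_biInter fun n _ => (k n).2.2).isCompact) hU'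
  exact mem_of_superset
    ((biInter_finset_mem s).2 fun n _ => mem_iInf_of_mem n (mem_principal_self _)) hs

end Topology

section PointAvoidingCountableSets

variable {L : Type*} [TopologicalSpace L] {p : L}

theorem not_countablyTight_of_forall_countable (hp : p ∈ closure {p}ᶜ)
    (hC : ∀ C : Set L, C.Countable → p ∉ C → p ∉ closure C) : ¬ CountablyTight L := fun hL => by
  obtain ⟨C, hCp, hCc, hpC⟩ := hL _ p hp
  exact hC C hCc (fun h => hCp h rfl) hpC

theorem firstCountableTopology_closure_of_forall_countable [T1Space L]
    [HereditarilyLindelofSpace L]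
    (hC : ∀ C : Set L, C.Countable → p ∉ C → p ∉ closure C)
    (hnhds : ∀ x ≠ p, (𝓝 x).IsCountablyGenerated) {D : Set L} (hD : DiscreteTopology D) :
    FirstCountableTopology (closure D) := by
  have hpD : p ∉ closure (D \ {p}) :=
    hC _ ((HereditarilyLindelofSpace.isLindelof _).countable (.of_subset hD sdiff_subset))
      fun h => h.2 rfl
  have hclosure : closure D ⊆ insert p (closure (D \ {p})) := by
    calc closure D ⊆ closure ({p} ∪ (D \ {p})) :=
          closure_mono (by rw [union_sdiff_self]; exact subset_union_right)
      _ = insert p (closure (D \ {p})) := by rw [closure_union, closure_singleton, insert_eq]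
  refine ⟨fun ⟨x, hx⟩ => ?_⟩
  by_cases hxp : x = p
  · subst hxp
    have : IsOpen ({⟨x, hx⟩} : Set (closure D)) := by
      convert (isClosed_closure (s := D \ {x})).isOpen_compl.preimage continuous_subtype_val
      ext ⟨y, hy⟩
      simp only [mem_singleton_iff, Subtype.mk.injEq, mem_preimage, mem_compl_iff]
      exact ⟨fun h => h ▸ hpD, fun h => ((hclosure hy).resolve_right h)⟩
    rw [(isOpen_singleton_iff_nhds_eq_pure _).1 this]
    infer_instance
  · have := hnhds x hxp
    rw [nhds_subtype_eq_comap]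
    infer_instance

end PointAvoidingCountableSets

section Chain

variable {X : Type*} [TopologicalSpace X]

def IsNowhereSeparable (Y : Set X) : Prop :=
  ∀ x ∈ Y, ∀ U ∈ 𝓝 x, ∀ D : Set X, D.Countable → ∃ y ∈ U ∩ Y, y ∉ closure D

theorem exists_nonempty_nowhere_separable [HereditarilyLindelofSpace X]
    (hX : ¬ SeparableSpace X) : ∃ Y : Set X, Y.Nonempty ∧ IsNowhereSeparable Y := by
  -- `Y` is what is left after removing every open set covered by the closure of a countable
  -- set; by hereditary Lindelöfness the removed part is itself covered by one such closure.
  let 𝒰 := {U : Set X | IsOpen U ∧ ∃ D : Set X, D.Countable ∧ U ⊆ closure D}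
  choose D hDc hD using fun U : 𝒰 => U.2.2
  obtain ⟨t, htc, ht⟩ := eq_open_union_countable (fun U : 𝒰 => (U : Set X)) fun U => U.2.1
  have hD₀c : (⋃ U ∈ t, D U).Countable := htc.biUnion fun U _ => hDc U
  have hD₀ : ⋃ U : 𝒰, (U : Set X) ⊆ closure (⋃ U ∈ t, D U) := by
    rw [← ht]
    exact iUnion₂_subset fun U hU => (hD U).trans (closure_mono (subset_biUnion_of_mem hU))
  refine ⟨(⋃ U : 𝒰, (U : Set X))ᶜ, ?_, fun x hx U hU D' hD'c => ?_⟩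
  · refine nonempty_compl.2 fun h => hX ⟨_, hD₀c, ?_⟩
    rw [dense_iff_closure_eq, ← univ_subset_iff, ← h]
    exact hD₀
  · by_contra! hsub
    have hU𝒰 : interior U ∈ 𝒰 := by
      refine ⟨isOpen_interior, D' ∪ ⋃ U ∈ t, D U, hD'c.union hD₀c, fun y hy => ?_⟩
      by_cases hy𝒰 : y ∈ ⋃ U : 𝒰, (U : Set X)
      · exact closure_mono subset_union_right (hD₀ hy𝒰)
      · exact closure_mono subset_union_left (hsub y ⟨interior_subset hy, hy𝒰⟩)
    exact hx (mem_iUnion.2 ⟨⟨_, hU𝒰⟩, mem_interior_iff_mem_nhds.2 hU⟩)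

theorem closure_iUnion_subset_iUnion_closure [FrechetUrysohnSpace X] {W : Type*} [Preorder W]
    {S : W → Set X} (hS : Monotone S) (hW : ∀ s : Set W, s.Countable → BddAbove s) :
    closure (⋃ w, S w) ⊆ ⋃ w, closure (S w) := fun z hz => by
  obtain ⟨u, hu, hlim⟩ := mem_closure_iff_seq_limit.1 hz
  choose w hw using fun n => mem_iUnion.1 (hu n)
  obtain ⟨b, hb⟩ := hW (range w) (countable_range w)
  exact mem_iUnion.2 ⟨b, mem_closure_of_tendsto hlim
    (Eventually.of_forall fun n => hS (hb ⟨n, rfl⟩) (hw n))⟩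

variable {W : Type*} [LinearOrder W] [WellFoundedLT W]

theorem exists_countable_chain [FirstCountableTopology X] (hW : ∀ w : W, (Iio w).Countable)
    {Y : Set X} (hY : Y.Nonempty) (hYsep : IsNowhereSeparable Y) :
    ∃ S : W → Set X, ∀ w, ((S w).Nonempty ∧ (S w).Countable ∧ S w ⊆ Y) ∧
      ∀ v < w, S v ⊆ S w ∧ ∀ x ∈ S v, ∀ U ∈ 𝓝 x, ∃ y ∈ S w ∩ U, y ∉ closure (S v) := by
  refine WellFoundedLT.exists_forall_of_extend
    (fun (_ : W) s => s.Nonempty ∧ s.Countable ∧ s ⊆ Y)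
    (fun s s' => s' ⊆ s ∧ ∀ x ∈ s', ∀ U ∈ 𝓝 x, ∃ y ∈ s ∩ U, y ∉ closure s') fun w S hS => ?_
  obtain ⟨y₀, hy₀⟩ := hY
  let A := ⋃ v ∈ Iio w, S v
  have hAc : A.Countable := (hW w).biUnion fun v hv => (hS v hv).1.2.1
  have hAY : A ⊆ Y := iUnion₂_subset fun v hv => (hS v hv).1.2.2
  have := hAc.to_subtype
  have hSA : ∀ v < w, S v ⊆ A := fun v hv => subset_biUnion_of_mem (u := S) hv
  choose b hb using fun x : X => (𝓝 x).exists_antitone_basis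
  choose y hy hyA using fun (x : A) (n : ℕ) => hYsep x (hAY x.2) (b x n) ((hb x).mem n) A hAc
  refine ⟨insert y₀ (A ∪ range (Function.uncurry y)),
    ⟨insert_nonempty _ _, (hAc.union (countable_range _)).insert _,
      insert_subset hy₀ (union_subset hAY (range_subset_iff.2 fun i => (hy i.1 i.2).2))⟩,
    fun v hv => ⟨(hSA v hv).trans (subset_union_left.trans (subset_insert _ _)),
      fun x hx U hU => ?_⟩⟩
  obtain ⟨n, -, hn⟩ := (hb x).toHasBasis.mem_iff.1 hU
  let x' : A := ⟨x, hSA v hv hx⟩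
  exact ⟨y x' n, ⟨subset_insert _ _ (subset_union_right ⟨(x', n), rfl⟩), hn (hy x' n).1⟩,
    fun h => hyA x' n (closure_mono (hSA v hv) h)⟩

end Chain

structure IsNowhereDenseClosedCover {W Z : Type*} [Preorder W] [TopologicalSpace Z]
    (c : W → Set Z) : Prop where
  monotone : Monotone c
  isClosed : ∀ w, IsClosed (c w)
  interior_eq_empty : ∀ w, interior (c w) = ∅
  iUnion_eq_univ : ⋃ w, c w = univ

theorem exists_nowhereDenseClosedCover {X W : Type*} [TopologicalSpace X]
    [FirstCountableTopology X]
    [LinearOrder W] [WellFoundedLT W] [NoMaxOrder W] [Nonempty W]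
    (hIio : ∀ w : W, (Iio w).Countable) (hbdd : ∀ s : Set W, s.Countable → BddAbove s)
    {Y : Set X} (hY : Y.Nonempty) (hYsep : IsNowhereSeparable Y) :
    ∃ K : Set X, IsClosed K ∧ K.Nonempty ∧ ∃ c : W → Set K, IsNowhereDenseClosedCover c := by
  obtain ⟨S, hS⟩ := exists_countable_chain hIio hY hYsep
  have hmono : Monotone S := fun v w hvw =>
    hvw.eq_or_lt.elim (fun h => h ▸ subset_rfl) fun h => ((hS w).2 v h).1
  obtain ⟨w₀⟩ := ‹Nonempty W›
  refine ⟨closure (⋃ w, S w), isClosed_closure,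
    ((hS w₀).1.1.mono (subset_iUnion S w₀)).mono subset_closure,
    fun w => Subtype.val ⁻¹' closure (S w),
    ⟨fun v w hvw => preimage_mono (closure_mono (hmono hvw)),
      fun w => isClosed_closure.preimage continuous_subtype_val, fun w => ?_,
      eq_univ_of_forall fun z => by
        simpa using closure_iUnion_subset_iUnion_closure hmono hbdd z.2⟩⟩
  refine eq_empty_of_forall_notMem fun z hz => ?_
  obtain ⟨V, hV, hVeq⟩ :=
    isOpen_induced_iff.1 (isOpen_interior (s := Subtype.val ⁻¹' closure (S w)))
  obtain ⟨x, hxV, hx⟩ := mem_closure_iff.1 z.2 V hV (by rw [← mem_preimage, hVeq]; exact hz)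
  obtain ⟨v, hxv⟩ := mem_iUnion.1 hx
  obtain ⟨u, hu⟩ := exists_gt (max v w)
  obtain ⟨y, ⟨hyS, hyV⟩, hy⟩ :=
    ((hS u).2 _ hu).2 x (hmono le_sup_left hxv) V (hV.mem_nhds hxV)
  have hyK : y ∈ closure (⋃ w, S w) := subset_closure (mem_iUnion_of_mem u hyS)
  have : (⟨y, hyK⟩ : closure (⋃ w, S w)) ∈ interior (Subtype.val ⁻¹' closure (S w)) := by
    rw [← hVeq]; exact hyV
  have hyw : y ∈ closure (S w) := interior_subset (s := Subtype.val ⁻¹' closure (S w)) this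
  exact hy (closure_mono (hmono le_sup_right) hyw)

theorem exists_isClopen_nonempty_subset_diff {Z : Type*} [TopologicalSpace Z]
    (hZ : IsTopologicalBasis {s : Set Z | IsClopen s}) {U c : Set Z} (hU : IsOpen U)
    (hUne : U.Nonempty) (hc : IsClosed c) (hc' : interior c = ∅) :
    ∃ V, IsClopen V ∧ V.Nonempty ∧ V ⊆ U \ c := by
  obtain ⟨z, hzU, hzc⟩ : (U \ c).Nonempty := by
    refine nonempty_iff_ne_empty.2 fun h => hUne.ne_empty ?_
    rw [← subset_empty_iff, ← hc']
    exact interior_maximal (sdiff_eq_empty.1 h) hU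
  obtain ⟨V, hV, hzV, hVU⟩ :=
    hZ.exists_subset_of_mem_open (a := z) (u := U \ c) ⟨hzU, hzc⟩ (hU.sdiff hc)
  exact ⟨V, hV, ⟨z, hzV⟩, hVU⟩

theorem exists_isClopen_eventually_subset_diff {Z P : Type*} [TopologicalSpace Z] [Nonempty Z]
    [Preorder P] [IsDirectedOrder P] [Countable P]
    (hZ : IsTopologicalBasis {s : Set Z | IsClopen s}) {S : P → ℕ → Set Z}
    (hS : ∀ p n, IsOpen (S p n) ∧ (S p n).Nonempty)
    (hS' : ∀ p q, p ≤ q → ∀ᶠ n in atTop, S q n ⊆ S p n) {c : Set Z} (hc : IsClosed c)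
    (hc' : interior c = ∅) :
    ∃ t : ℕ → Set Z, (∀ n, IsClopen (t n) ∧ (t n).Nonempty ∧ Disjoint (t n) c) ∧
      ∀ p, ∀ᶠ n in atTop, t n ⊆ S p n := by
  have hV (U : Set Z) (hU : IsOpen U) (hUne : U.Nonempty) :=
    exists_isClopen_nonempty_subset_diff hZ hU hUne hc hc'
  rcases isEmpty_or_nonempty P with hP | hP
  · obtain ⟨V, hV, hVne, hVc⟩ := hV univ isOpen_univ univ_nonempty
    exact ⟨fun _ => V, fun _ => ⟨hV, hVne, disjoint_left.2 fun z hz => (hVc hz).2⟩,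
      isEmptyElim⟩
  · obtain ⟨f, hf⟩ := exists_eventually_le_of_countable S hS'
    choose t ht using fun n => hV (S (f n) n) (hS (f n) n).1 (hS (f n) n).2
    exact ⟨t, fun n => ⟨(ht n).1, (ht n).2.1, disjoint_left.2 fun z hz => ((ht n).2.2 hz).2⟩,
      fun p => (hf p).mono fun n hn => (ht n).2.2.trans (sdiff_subset.trans hn)⟩

structure IsClopenTower {W Z : Type*} [Preorder W] [TopologicalSpace Z] (T : W → ℕ → Set Z) :
    Prop where
  isClopen : ∀ w n, IsClopen (T w n)
  nonempty : ∀ w n, (T w n).Nonempty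
  eventually_subset : ∀ v w, v ≤ w → ∀ᶠ n in atTop, T w n ⊆ T v n
  exists_disjoint : ∀ D : Set Z, D.Countable → ∃ w, ∀ n, Disjoint (T w n) D

theorem exists_isClopenTower {Z W : Type*} [TopologicalSpace Z] [Nonempty Z]
    [LinearOrder W] [WellFoundedLT W]
    (hIio : ∀ w : W, (Iio w).Countable) (hbdd : ∀ s : Set W, s.Countable → BddAbove s)
    (hZ : IsTopologicalBasis {s : Set Z | IsClopen s}) {c : W → Set Z}
    (hc : IsNowhereDenseClosedCover c) : ∃ T : W → ℕ → Set Z, IsClopenTower T := by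
  obtain ⟨T, hT⟩ := WellFoundedLT.exists_forall_of_extend
    (fun (w : W) (t : ℕ → Set Z) =>
      ∀ n, IsClopen (t n) ∧ (t n).Nonempty ∧ Disjoint (t n) (c w))
    (fun t s : ℕ → Set Z => ∀ᶠ n in atTop, t n ⊆ s n) fun w T hT => by
      have := (hIio w).to_subtype
      refine (exists_isClopen_eventually_subset_diff hZ (S := fun p : Iio w => T p)
        (fun p n => ⟨((hT p p.2).1 n).1.isOpen, ((hT p p.2).1 n).2.1⟩)
        (fun p q hpq => hpq.eq_or_lt.elim
          (fun h => h ▸ Eventually.of_forall fun _ => subset_rfl) fun h => (hT q q.2).2 p h)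
        (hc.isClosed w) (hc.interior_eq_empty w)).imp
        fun t ht => ⟨ht.1, fun v hv => ht.2 ⟨v, hv⟩⟩
  refine ⟨T, fun w n => ((hT w).1 n).1, fun w n => ((hT w).1 n).2.1,
    fun v w hvw => hvw.eq_or_lt.elim (fun h => h ▸ Eventually.of_forall fun _ => subset_rfl)
      fun h => (hT w).2 v h, fun D hD => ?_⟩
  have := hD.to_subtype
  choose w hw using fun z : D => mem_iUnion.1 (hc.iUnion_eq_univ.symm ▸ mem_univ (z : Z))
  obtain ⟨b, hb⟩ := hbdd (range w) (countable_range w)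
  exact ⟨b, fun n => disjoint_left.2 fun z hz hzD =>
    disjoint_left.1 ((hT b).1 n).2.2 hz (hc.monotone (hb ⟨⟨z, hzD⟩, rfl⟩) (hw ⟨z, hzD⟩))⟩

/-- `Option X`, topologised so that a set is open iff its trace on `X` is open and, if it
contains the new point `pt`, lies in `F`. With `X = Σ _ : ℕ, Z` (that is, `ω × Z`) and
`F = towerFilter T` this is the space `L(Z)` of the construction. -/
def AdjoinPoint (X : Type*) (_F : Filter X) : Type _ := Option X

namespace AdjoinPoint

variable {X : Type*} {F : Filter X}

@[coe] def some : X → AdjoinPoint X F := Option.some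

def pt : AdjoinPoint X F := Option.none

@[elab_as_elim, induction_eliminator]
protected def rec {C : AdjoinPoint X F → Sort*} (pt : C pt) (some : ∀ x, C (some x)) :
    ∀ y, C y :=
  fun y => Option.rec pt some y

theorem some_injective : Function.Injective (some : X → AdjoinPoint X F) :=
  Option.some_injective X

theorem some_ne_pt (x : X) : (some x : AdjoinPoint X F) ≠ pt :=
  Option.some_ne_none x

theorem insert_pt_range_some : insert pt (range some) = (univ : Set (AdjoinPoint X F)) :=
  insert_none_range_some X

theorem preimage_some_insert_pt_image (s : Set X) :
    some ⁻¹' (insert pt (some '' s) : Set (AdjoinPoint X F)) = s := by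
  ext x
  simp [some_injective.eq_iff, some_ne_pt]

theorem compl_insert_pt_image (s : Set X) :
    (insert pt (some '' s) : Set (AdjoinPoint X F))ᶜ = some '' sᶜ := by
  ext y
  induction y with
  | pt => simp [(some_ne_pt _).symm, eq_comm]
  | some x => simp [some_injective.eq_iff, (some_ne_pt x)]

variable [TopologicalSpace X]

instance : TopologicalSpace (AdjoinPoint X F) where
  IsOpen U := IsOpen (some ⁻¹' U) ∧ (pt ∈ U → some ⁻¹' U ∈ F)
  isOpen_univ := ⟨isOpen_univ, fun _ => univ_mem⟩
  isOpen_inter U V hU hV := ⟨hU.1.inter hV.1, fun h => inter_mem (hU.2 h.1) (hV.2 h.2)⟩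
  isOpen_sUnion 𝒰 h𝒰 := by
    refine ⟨by rw [preimage_sUnion]; exact isOpen_biUnion fun U hU => (h𝒰 U hU).1, ?_⟩
    rintro ⟨U, hU, hpt⟩
    exact mem_of_superset ((h𝒰 U hU).2 hpt) (preimage_mono (subset_sUnion_of_mem hU))

theorem isOpen_iff {U : Set (AdjoinPoint X F)} :
    IsOpen U ↔ IsOpen (some ⁻¹' U) ∧ (pt ∈ U → some ⁻¹' U ∈ F) :=
  Iff.rfl

theorem isOpenEmbedding_some : IsOpenEmbedding (some : X → AdjoinPoint X F) := by
  refine .of_continuous_injective_isOpenMap (continuous_def.2 fun U hU => hU.1) some_injective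
    fun s hs => ⟨by rwa [some_injective.preimage_image],
      fun ⟨x, _, hx⟩ => (some_ne_pt x hx).elim⟩

theorem isOpen_insert_pt_image {s : Set X} (hs : IsOpen s) (hsF : s ∈ F) :
    IsOpen (insert pt (some '' s) : Set (AdjoinPoint X F)) := by
  rw [isOpen_iff, preimage_some_insert_pt_image]
  exact ⟨hs, fun _ => hsF⟩

theorem isClopen_insert_pt_image {s : Set X} (hs : IsClopen s) (hsF : s ∈ F) :
    IsClopen (insert pt (some '' s) : Set (AdjoinPoint X F)) := by
  refine ⟨⟨?_⟩, isOpen_insert_pt_image hs.isOpen hsF⟩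
  rw [compl_insert_pt_image]
  exact isOpenEmbedding_some.isOpenMap _ hs.isClosed.isOpen_compl

theorem isClopen_image_some {s : Set X} (hs : IsClopen s) (hsF : sᶜ ∈ F) :
    IsClopen (some '' s : Set (AdjoinPoint X F)) := by
  refine ⟨⟨?_⟩, isOpenEmbedding_some.isOpenMap _ hs.isOpen⟩
  rw [← compl_compl s, ← compl_insert_pt_image, compl_compl]
  exact isOpen_insert_pt_image hs.isClosed.isOpen_compl hsF

theorem nhds_some (x : X) : 𝓝 (some x : AdjoinPoint X F) = map some (𝓝 x) :=
  (isOpenEmbedding_some.map_nhds_eq x).symm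

theorem nhds_pt (hF : ∀ s ∈ F, ∃ t ∈ F, IsOpen t ∧ t ⊆ s) :
    𝓝 (pt : AdjoinPoint X F) = pure pt ⊔ map some F := by
  refine le_antisymm (fun s hs => ?_) (sup_le (pure_le_nhds pt) fun s hs => ?_)
  · obtain ⟨hpt, hsF⟩ := mem_sup.1 hs
    obtain ⟨t, htF, ht, hts⟩ := hF _ hsF
    exact mem_of_superset ((isOpen_insert_pt_image ht htF).mem_nhds (mem_insert _ _))
      (insert_subset hpt (image_subset_iff.2 hts))
  · obtain ⟨U, hUs, hU, hpt⟩ := mem_nhds_iff.1 hs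
    exact mem_of_superset (hU.2 hpt) (preimage_mono hUs)

theorem t2Space [T2Space X] (hF : ∀ s ∈ F, ∃ t ∈ F, IsOpen t ∧ t ⊆ s)
    (hFx : ∀ x, Disjoint F (𝓝 x)) : T2Space (AdjoinPoint X F) := by
  have hpt_some : ∀ x, Disjoint (𝓝 (pt : AdjoinPoint X F)) (𝓝 (some x)) := fun x => by
    rw [nhds_pt hF, nhds_some, disjoint_sup_left, disjoint_map some_injective]
    rw [← principal_singleton, disjoint_principal_left]
    exact ⟨mem_map.2 (univ_mem' fun y => some_ne_pt y), hFx x⟩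
  refine t2Space_iff_disjoint_nhds.2 fun y z hyz => ?_
  induction y with
  | pt =>
    induction z with
    | pt => exact (hyz rfl).elim
    | some x => exact hpt_some x
  | some x =>
    induction z with
    | pt => exact (hpt_some x).symm
    | some x' =>
      rw [nhds_some, nhds_some, disjoint_map some_injective]
      exact disjoint_nhds_nhds.2 (ne_of_apply_ne some hyz)

instance [HereditarilyLindelofSpace X] : HereditarilyLindelofSpace (AdjoinPoint X F) := by
  refine ⟨fun t _ => ?_⟩
  have : t = (t ∩ {pt}) ∪ some '' (some ⁻¹' t) := by
    rw [image_preimage_eq_inter_range, ← inter_union_distrib_left, ← insert_eq,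
      insert_pt_range_some, inter_univ]
  rw [this]
  exact (subsingleton_singleton.anti inter_subset_right).isLindelof.union
    ((HereditarilyLindelofSpace.isLindelof _).image isOpenEmbedding_some.continuous)

instance [SigmaCompactSpace X] : SigmaCompactSpace (AdjoinPoint X F) := by
  rw [← isSigmaCompact_univ_iff, ← insert_pt_range_some, insert_eq, union_eq_iUnion]
  refine isSigmaCompact_iUnion _ fun b => ?_
  cases b
  exacts [isSigmaCompact_range isOpenEmbedding_some.continuous,
    isCompact_singleton.isSigmaCompact]

theorem isTopologicalBasis_isClopen (hX : IsTopologicalBasis {s : Set X | IsClopen s})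
    (hF : ∀ s ∈ F, ∃ t ∈ F, IsClopen t ∧ t ⊆ s) (hFx : ∀ x, Disjoint F (𝓝 x)) :
    IsTopologicalBasis {s : Set (AdjoinPoint X F) | IsClopen s} := by
  refine isTopologicalBasis_of_isOpen_of_nhds (fun _ h => h.isOpen) fun y U hyU hU => ?_
  induction y with
  | pt =>
    obtain ⟨t, htF, ht, htU⟩ := hF _ (hU.2 hyU)
    exact ⟨_, isClopen_insert_pt_image ht htF, mem_insert _ _,
      insert_subset hyU (image_subset_iff.2 htU)⟩
  | some x =>
    obtain ⟨s, hsF, u, hu, hsu⟩ := Filter.disjoint_iff.1 (hFx x)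
    obtain ⟨t, htF, ht, hts⟩ := hF s hsF
    obtain ⟨V, hV, hxV, hVU⟩ := hX.exists_subset_of_mem_open (a := x) (u := some ⁻¹' U ∩ tᶜ)
      ⟨hyU, fun hxt => hsu.le_bot ⟨hts hxt, mem_of_mem_nhds hu⟩⟩
      (hU.1.inter ht.isClosed.isOpen_compl)
    exact ⟨some '' V,
      isClopen_image_some hV (mem_of_superset htF fun z hz hzV => (hVU hzV).2 hz),
      mem_image_of_mem _ hxV, image_subset_iff.2 fun z hz => (hVU hz).1⟩

theorem pt_mem_closure_compl [F.NeBot] : (pt : AdjoinPoint X F) ∈ closure {pt}ᶜ := by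
  refine mem_closure_iff.2 fun U hU hpt => ?_
  obtain ⟨x, hx⟩ := Filter.nonempty_of_mem (hU.2 hpt)
  exact ⟨some x, hx, some_ne_pt x⟩

theorem pt_notMem_closure (hF : ∀ s ∈ F, ∃ t ∈ F, IsOpen t ∧ t ⊆ s)
    (hFC : ∀ C : Set X, C.Countable → Cᶜ ∈ F) {C : Set (AdjoinPoint X F)} (hC : C.Countable)
    (hpt : pt ∉ C) : pt ∉ closure C := by
  intro h
  have hnhds : (insert pt (some '' (some ⁻¹' C)ᶜ) : Set (AdjoinPoint X F)) ∈ 𝓝 pt := by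
    rw [nhds_pt hF, mem_sup, mem_map, preimage_some_insert_pt_image]
    exact ⟨mem_insert _ _, hFC _ (hC.preimage some_injective)⟩
  obtain ⟨y, hy, hyC⟩ := mem_closure_iff_nhds.1 h _ hnhds
  obtain rfl | ⟨x, hx, rfl⟩ := hy
  exacts [hpt hyC, hx hyC]

end AdjoinPoint

section TowerFilter

variable {W Z : Type*}

def towerSet (T : W → ℕ → Set Z) (w : W) (m : ℕ) : Set (Σ _ : ℕ, Z) :=
  {p | m ≤ p.1 ∧ p.2 ∈ T w p.1}

def towerFilter (T : W → ℕ → Set Z) : Filter (Σ _ : ℕ, Z) :=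
  ⨅ i : W × ℕ, 𝓟 (towerSet T i.1 i.2)

variable {T : W → ℕ → Set Z}

theorem towerSet_mem_towerFilter (w : W) (m : ℕ) : towerSet T w m ∈ towerFilter T :=
  mem_iInf_of_mem (w, m) (mem_principal_self _)

theorem towerSet_subset_towerSet {v w : W} {m m' : ℕ} (hm : m' ≤ m)
    (h : ∀ n ≥ m, T w n ⊆ T v n) : towerSet T w m ⊆ towerSet T v m' :=
  fun p hp => ⟨hm.trans hp.1, h p.1 hp.1 hp.2⟩

theorem hasBasis_towerFilter [Preorder W] [IsDirectedOrder W] [Nonempty W]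
    (hT : ∀ v w, v ≤ w → ∀ᶠ n in atTop, T w n ⊆ T v n) :
    (towerFilter T).HasBasis (fun _ => True) fun i : W × ℕ => towerSet T i.1 i.2 := by
  refine hasBasis_iInf_principal fun i j => ?_
  obtain ⟨w, hiw, hjw⟩ := exists_ge_ge i.1 j.1
  obtain ⟨m₁, h₁⟩ := eventually_atTop.1 (hT _ _ hiw)
  obtain ⟨m₂, h₂⟩ := eventually_atTop.1 (hT _ _ hjw)
  let m := max (max m₁ i.2) (max m₂ j.2)
  exact ⟨(w, m), towerSet_subset_towerSet (by omega) fun n hn => h₁ n (by omega),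
    towerSet_subset_towerSet (by omega) fun n hn => h₂ n (by omega)⟩

theorem isClopen_towerSet [TopologicalSpace Z] (hT : ∀ w n, IsClopen (T w n)) (w : W)
    (m : ℕ) : IsClopen (towerSet T w m) := by
  have h : ∀ n, IsClopen (Sigma.mk n ⁻¹' towerSet T w m) := fun n => by
    by_cases hmn : m ≤ n
    · simpa [towerSet, hmn] using hT w n
    · simpa [towerSet, hmn] using isClopen_empty
  exact ⟨isClosed_sigma_iff.2 fun n => (h n).isClosed, isOpen_sigma_iff.2 fun n => (h n).isOpen⟩

theorem disjoint_towerFilter_nhds [TopologicalSpace Z] [Nonempty W] (x : Σ _ : ℕ, Z) :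
    Disjoint (towerFilter T) (𝓝 x) := by
  refine Filter.disjoint_of_disjoint_of_mem ?_
    (towerSet_mem_towerFilter (Classical.arbitrary W) (x.1 + 1))
    ((isOpen_sigma_fst_preimage {x.1}).mem_nhds rfl)
  exact disjoint_left.2 fun p hp hpx => by simp [towerSet] at hp hpx; omega

theorem compl_mem_towerFilter (hT : ∀ D : Set Z, D.Countable → ∃ w, ∀ n, Disjoint (T w n) D)
    {C : Set (Σ _ : ℕ, Z)} (hC : C.Countable) : Cᶜ ∈ towerFilter T := by
  obtain ⟨w, hw⟩ := hT (Sigma.snd '' C) (hC.image _)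
  exact mem_of_superset (towerSet_mem_towerFilter w 0)
    fun p hp hpC => disjoint_left.1 (hw p.1) hp.2 (mem_image_of_mem _ hpC)

end TowerFilter

theorem tkachukCounterexample_adjoinPoint_towerFilter {Z : Type} [TopologicalSpace Z]
    [SigmaCompactSpace Z] [T2Space Z] [HereditarilyLindelofSpace Z] [FirstCountableTopology Z]
    (hZ : IsTopologicalBasis {s : Set Z | IsClopen s}) {W : Type*} [Preorder W]
    [IsDirectedOrder W] [Nonempty W] {T : W → ℕ → Set Z} (hT : IsClopenTower T) :
    TkachukCounterexample (AdjoinPoint (Σ _ : ℕ, Z) (towerFilter T)) := by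
  have hbasis := hasBasis_towerFilter hT.eventually_subset
  have hF : ∀ s ∈ towerFilter T, ∃ t ∈ towerFilter T, IsClopen t ∧ t ⊆ s := fun s hs =>
    let ⟨i, _, hi⟩ := hbasis.mem_iff.1 hs
    ⟨_, towerSet_mem_towerFilter i.1 i.2, isClopen_towerSet hT.isClopen i.1 i.2, hi⟩
  have hFopen : ∀ s ∈ towerFilter T, ∃ t ∈ towerFilter T, IsOpen t ∧ t ⊆ s := fun s hs =>
    let ⟨t, ht, htc, hts⟩ := hF s hs
    ⟨t, ht, htc.isOpen, hts⟩
  have hpt : ∀ C : Set (AdjoinPoint _ (towerFilter T)), C.Countable → AdjoinPoint.pt ∉ C →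
      AdjoinPoint.pt ∉ closure C := fun C hC =>
    AdjoinPoint.pt_notMem_closure hFopen (fun _ => compl_mem_towerFilter hT.exists_disjoint) hC
  have : (towerFilter T).NeBot := hbasis.neBot_iff.2 fun {i} _ =>
    let ⟨z, hz⟩ := hT.nonempty i.1 i.2
    ⟨⟨i.2, z⟩, le_rfl, hz⟩
  have := AdjoinPoint.t2Space hFopen disjoint_towerFilter_nhds
  refine ⟨inferInstance, inferInstance, inferInstance,
    AdjoinPoint.isTopologicalBasis_isClopen (isTopologicalBasis_isClopen_sigma fun _ => hZ) hF
      disjoint_towerFilter_nhds,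
    not_countablyTight_of_forall_countable AdjoinPoint.pt_mem_closure_compl hpt,
    fun D hD => firstCountableTopology_closure_of_forall_countable hpt (fun y hy => ?_) hD⟩
  induction y with
  | pt => exact (hy rfl).elim
  | some x => rw [AdjoinPoint.nhds_some]; infer_instance

/-- If there is a 0-dimensional compact L-space, then there is a σ-compact,
hereditarily Lindelöf, 0-dimensional Hausdorff space that is not countably tight
but in which the closure of every discrete subset is first countable. -/
theorem tkachuk_counterexample_of_compact_Lspace
    (h : ∃ (X : Type) (tX : TopologicalSpace X), @ZeroDimCompactLSpace X tX) :
    ∃ (Y : Type) (tY : TopologicalSpace Y), @TkachukCounterexample Y tY := by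
  obtain ⟨X, _, _, _, _, hX, hXbasis⟩ := h
  have := firstCountableTopology_of_hereditarilyLindelof (X := X)
  obtain ⟨Y, hY, hYsep⟩ := exists_nonempty_nowhere_separable hX
  obtain ⟨K, hK, hKne, c, hc⟩ := exists_nowhereDenseClosedCover (W := Omega1)
    Omega1.countable_Iio Omega1.bddAbove_of_countable hY hYsep
  have := isCompact_iff_compactSpace.1 hK.isCompact
  have := hKne.to_subtype
  have hKbasis := (IsInducing.subtypeVal (t := K)).isTopologicalBasis_isClopen hXbasis
  obtain ⟨T, hT⟩ := exists_isClopenTower Omega1.countable_Iio Omega1.bddAbove_of_countable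
    hKbasis hc
  exact ⟨_, _, tkachukCounterexample_adjoinPoint_towerFilter hKbasis hT⟩
end

section
/- Let X be a first countable space and for each x ∈ X fix a countable neighborhood base ℬ_x. Call S ⊆ X ℬ-full if for all x, x′ ∈ S, B ∈ ℬ_x, B′ ∈ ℬ_{x′}, if B ∩ B′ ≠ ∅ then B ∩ B′ ∩ S ≠ ∅. Then every countable subset A of X is contained in a countable ℬ-full set S(A). -/
open Set Topology TopologicalSpace

/-- `S` is ℬ-full: for all `x, x' ∈ S`, `B ∈ ℬ x`, `B' ∈ ℬ x'`, if `B ∩ B' ≠ ∅`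
then `B ∩ B' ∩ S ≠ ∅`. -/
def BFull {X : Type*} (B : X → Set (Set X)) (S : Set X) : Prop :=
  ∀ x ∈ S, ∀ x' ∈ S, ∀ b ∈ B x, ∀ b' ∈ B x',
    (b ∩ b').Nonempty → (b ∩ b' ∩ S).Nonempty

/-- If each point `x` of a first countable space has a fixed countable
neighborhood base `ℬ x`, then every countable set `A` is contained in a countable
ℬ-full set. -/
theorem exists_countable_BFull {X : Type*} [TopologicalSpace X]
    (B : X → Set (Set X))
    (hcnt : ∀ x : X, (B x).Countable)
    (hnhds : ∀ x : X, ∀ b ∈ B x, b ∈ nhds x)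
    (hbasis : ∀ x : X, ∀ V ∈ nhds x, ∃ b ∈ B x, b ⊆ V)
    (A : Set X) (hA : A.Countable) :
    ∃ S : Set X, A ⊆ S ∧ S.Countable ∧ BFull B S := by
  classical
  -- witness set for a pair of basic sets
  set w : Set X → Set X → Set X :=
    fun b b' => if h : (b ∩ b').Nonempty then {h.choose} else ∅ with hw
  have hwsub : ∀ b b', w b b' ⊆ b ∩ b' := by
    intro b b' y hy
    simp only [hw] at hy
    split_ifs at hy with h
    · rcases hy with rfl; exact h.choose_spec
    · exact absurd hy (notMem_empty y)
  have hwne : ∀ b b', (b ∩ b').Nonempty → (w b b').Nonempty := by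
    intro b b' h
    simp only [hw, dif_pos h]
    exact singleton_nonempty _
  have hwcnt : ∀ b b', (w b b').Countable := by
    intro b b'
    simp only [hw]
    split_ifs
    · exact countable_singleton _
    · exact countable_empty
  -- one-step closure operator
  set F : Set X → Set X :=
    fun S => S ∪ ⋃ x ∈ S, ⋃ b ∈ B x, ⋃ x' ∈ S, ⋃ b' ∈ B x', w b b' with hF
  have hFsub : ∀ S, S ⊆ F S := fun S => subset_union_left
  have hFcnt : ∀ S : Set X, S.Countable → (F S).Countable := by
    intro S hS
    refine hS.union ?_
    refine hS.biUnion fun x _ => (hcnt x).biUnion fun b _ =>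
      hS.biUnion fun x' _ => (hcnt x').biUnion fun b' _ => hwcnt b b'
  -- iterate ω times
  set T : ℕ → Set X := fun n => F^[n] A with hT
  have hTmono : ∀ n, T n ⊆ T (n + 1) := by
    intro n
    have : T (n + 1) = F (T n) := by
      simp only [hT, Function.iterate_succ_apply']
    rw [this]; exact hFsub _
  have hTle : ∀ m n, m ≤ n → T m ⊆ T n := by
    intro m n h
    induction n with
    | zero => simpa [Nat.le_zero.mp h] using Subset.rfl
    | succ n ih =>
      rcases Nat.lt_or_ge m (n + 1) with h' | h'
      · exact (ih (Nat.lt_succ_iff.mp h')).trans (hTmono n)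
      · have : m = n + 1 := le_antisymm h h'
        subst this; exact Subset.rfl
  have hTcnt : ∀ n, (T n).Countable := by
    intro n
    induction n with
    | zero => simpa [hT] using hA
    | succ n ih =>
      have : T (n + 1) = F (T n) := by
        simp only [hT, Function.iterate_succ_apply']
      rw [this]; exact hFcnt _ ih
  refine ⟨⋃ n, T n, ?_, countable_iUnion hTcnt, ?_⟩
  · exact subset_iUnion_of_subset 0 (by simp [hT])
  · intro x hx x' hx' b hb b' hb' hne
    rcases mem_iUnion.mp hx with ⟨m, hm⟩
    rcases mem_iUnion.mp hx' with ⟨n, hn⟩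
    have hm' : x ∈ T (max m n) := hTle m _ (le_max_left m n) hm
    have hn' : x' ∈ T (max m n) := hTle n _ (le_max_right m n) hn
    rcases hwne b b' hne with ⟨y, hy⟩
    refine ⟨y, hwsub b b' hy, ?_⟩
    refine mem_iUnion.mpr ⟨max m n + 1, ?_⟩
    have : T (max m n + 1) = F (T (max m n)) := by
      simp only [hT, Function.iterate_succ_apply']
    rw [this]
    refine Or.inr ?_
    simp only [mem_iUnion]
    exact ⟨x, hm', b, hb, x', hn', b', hb', hy⟩
end

section
/- Let X be a first countable, non-separable, CCC space. Then there is a closed subspace Y of X that is CCC, has density exactly ω₁, and contains no countable dense subset; moreover Y has a regular closed (in Y) subspace Z that is nowhere separable, CCC, and has density ω₁. -/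
open Set Topology TopologicalSpace

/-- `Y` has density exactly ω₁: a dense set of size at most ℵ₁ exists, but no
countable dense set. -/
def DensityAleph1 (Y : Type*) [TopologicalSpace Y] : Prop :=
  (∃ D : Set Y, Dense D ∧ Cardinal.mk ↥D ≤ Cardinal.aleph 1) ∧
  ∀ D : Set Y, Dense D → ¬ D.Countable

/-!
Fix countable open neighbourhood bases `B x` and call `A` full if any two basic sets `B x i`,
`B y j` with `x, y ∈ A` that meet also meet inside `A`. The closure of a full set inherits the
CCC: a disjoint family of open sets of `closure A` yields basic open sets of `X` around points of
`A`, and fullness keeps those disjoint. Every countable set has a countable full superset, so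
non-separability gives an `ω₁`-chain of countable full sets, each containing a point outside the
closure of the earlier ones. Its union `D` has size `ℵ₁` and `Y = closure D` is CCC. By first
countability a countable subset of `Y` lies in the closure of an initial segment of the chain,
so `Y` is not separable.

In a non-separable CCC space, a maximal disjoint family of nonempty separable open sets is
countable, so its union `V` is separable and `Z = closure (closure V)ᶜ` is the required regular
closed, nowhere separable set.
-/

open Cardinal Filter

universe u

section CCC

variable {X Y : Type*} [TopologicalSpace X] [TopologicalSpace Y]

theorem CCC.of_rel (hX : CCC X) (R : Set Y → Set X → Prop)
    (hR : ∀ U, IsOpen U → U.Nonempty → ∃ V, IsOpen V ∧ V.Nonempty ∧ R U V)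
    (hdisj : ∀ U U' V V', R U V → R U' V' → Disjoint U U' → Disjoint V V') : CCC Y := by
  intro 𝒰 h𝒰 h𝒰d
  choose V hVo hVne hRV using fun U : 𝒰 => hR U (h𝒰 U U.2).1 (h𝒰 U U.2).2
  have hVd : Pairwise fun U U' => Disjoint (V U) (V U') := fun U U' h =>
    hdisj _ _ _ _ (hRV U) (hRV U') (h𝒰d U.2 U'.2 (Subtype.coe_injective.ne h))
  have hinj : Function.Injective V :=
    pairwise_ne_iff_injective.1 fun U U' h => (hVd h).ne (hVne U).ne_empty
  have hrange : (range V).Countable :=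
    hX _ (forall_mem_range.2 fun U => ⟨hVo U, hVne U⟩) hVd.range_pairwise
  have := hrange.to_subtype
  exact countable_coe_iff.1 (rangeFactorization_injective.2 hinj).countable

theorem IsOpen.ccc_closure {G : Set X} (hG : IsOpen G) (hX : CCC X) : CCC (closure G) := by
  refine hX.of_rel (fun U V => V ⊆ G ∧ (↑) ⁻¹' V ⊆ U) ?_ ?_
  · rintro U hU ⟨z, hz⟩
    obtain ⟨O, hO, rfl⟩ := isOpen_induced_iff.1 hU
    exact ⟨O ∩ G, hO.inter hG, mem_closure_iff.1 z.2 O hO hz, inter_subset_right,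
      preimage_mono inter_subset_left⟩
  · rintro U U' V V' ⟨hVG, hVU⟩ ⟨-, hVU'⟩ hUU'
    refine disjoint_left.2 fun x hxV hxV' => ?_
    let z : closure G := ⟨x, subset_closure (hVG hxV)⟩
    exact disjoint_left.1 hUU' (hVU (show ↑z ∈ V from hxV)) (hVU' (show ↑z ∈ V' from hxV'))

theorem DensityAleph1.of_subset_closure {T S : Set X} (hTS : T ⊆ S) (hST : S ⊆ closure T)
    (hT : #T ≤ ℵ₁) (hS : ¬ SeparableSpace S) : DensityAleph1 S := by
  refine ⟨⟨(↑) ⁻¹' T, ?_, (mk_preimage_of_injective _ _ Subtype.val_injective).trans hT⟩,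
    fun D hD hDc => hS ⟨D, hDc, hD⟩⟩
  refine IsInducing.subtypeVal.dense_iff.2 fun x => ?_
  rw [Subtype.image_preimage_coe, inter_eq_right.2 hTS]
  exact hST x.2

end CCC

section Full

variable {X ι : Type*}

theorem Set.Countable.exists_countable_closed_superset {κ : Type*} [Countable κ]
    (op : κ → X → X → X) {A : Set X} (hA : A.Countable) :
    ∃ A', A ⊆ A' ∧ A'.Countable ∧ ∀ k, ∀ x ∈ A', ∀ y ∈ A', op k x y ∈ A' := by
  let S : ℕ → Set X := fun n => (fun T => T ∪ ⋃ k, Set.image2 (op k) T T)^[n] A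
  have hS : ∀ n, S (n + 1) = S n ∪ ⋃ k, Set.image2 (op k) (S n) (S n) := fun n =>
    Function.iterate_succ_apply' _ n A
  have hmono : Monotone S := monotone_nat_of_le_succ fun n => by
    rw [hS]
    exact subset_union_left
  refine ⟨⋃ n, S n, subset_iUnion S 0, countable_iUnion fun n => ?_, ?_⟩
  · induction n with
    | zero => exact hA
    | succ n ih =>
      rw [hS]
      exact ih.union (countable_iUnion fun k => ih.image2 ih _)
  · intro k x hx y hy
    obtain ⟨m, hm⟩ := mem_iUnion.1 hx
    obtain ⟨n, hn⟩ := mem_iUnion.1 hy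
    refine mem_iUnion.2 ⟨max m n + 1, ?_⟩
    rw [hS]
    refine Or.inr (mem_iUnion.2 ⟨k, ?_⟩)
    exact mem_image2_of_mem (hmono (le_max_left m n) hm) (hmono (le_max_right m n) hn)

variable (B : X → ι → Set X)

def IsFull (A : Set X) : Prop :=
  ∀ x ∈ A, ∀ y ∈ A, ∀ i j, (B x i ∩ B y j).Nonempty →
    (A ∩ (B x i ∩ B y j)).Nonempty

theorem exists_isFull_countable_superset [Countable ι] {A : Set X} (hA : A.Countable) :
    ∃ A', A ⊆ A' ∧ A'.Countable ∧ IsFull B A' := by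
  classical
  let w : ι × ι → X → X → X := fun p x y =>
    if h : (B x p.1 ∩ B y p.2).Nonempty then h.some else x
  obtain ⟨A', hAA', hc, hclosed⟩ := hA.exists_countable_closed_superset w
  refine ⟨A', hAA', hc, fun x hx y hy i j h => ⟨w (i, j) x y, hclosed _ x hx y hy, ?_⟩⟩
  simpa only [w, dif_pos h] using h.some_mem

theorem isFull_iUnion {κ : Type*} {A : κ → Set X} (hdir : Directed (· ⊆ ·) A)
    (hA : ∀ k, IsFull B (A k)) : IsFull B (⋃ k, A k) := by
  intro x hx y hy i j h
  obtain ⟨k, hk⟩ := mem_iUnion.1 hx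
  obtain ⟨l, hl⟩ := mem_iUnion.1 hy
  obtain ⟨m, hkm, hlm⟩ := hdir k l
  obtain ⟨z, hz, hzB⟩ := hA m x (hkm hk) y (hlm hl) i j h
  exact ⟨z, mem_iUnion_of_mem m hz, hzB⟩

theorem IsFull.ccc_closure [TopologicalSpace X] {A : Set X} (hA : IsFull B A) (hX : CCC X)
    (hBo : ∀ x i, IsOpen (B x i)) (hB : ∀ x, (𝓝 x).HasBasis (fun _ => True) (B x)) :
    CCC (closure A) := by
  refine hX.of_rel (fun U V => ∃ a ∈ A, ∃ i, V = B a i ∧ (↑) ⁻¹' V ⊆ U) ?_ ?_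
  · rintro U hU ⟨z, hz⟩
    obtain ⟨O, hO, rfl⟩ := isOpen_induced_iff.1 hU
    obtain ⟨a, haO, ha⟩ := mem_closure_iff.1 z.2 O hO hz
    obtain ⟨i, -, hi⟩ := (hB a).mem_iff.1 (hO.mem_nhds haO)
    exact ⟨B a i, hBo a i, ⟨a, mem_of_mem_nhds ((hB a).mem_of_mem trivial)⟩,
      a, ha, i, rfl, preimage_mono hi⟩
  · rintro U U' _ _ ⟨a, ha, i, rfl, hU⟩ ⟨a', ha', i', rfl, hU'⟩ hUU'
    refine disjoint_left.2 fun x hx hx' => ?_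
    obtain ⟨z, hzA, hz, hz'⟩ := hA a ha a' ha' i i' ⟨x, hx, hx'⟩
    let w : closure A := ⟨z, subset_closure hzA⟩
    exact disjoint_left.1 hUU' (hU (show ↑w ∈ B a i from hz))
      (hU' (show ↑w ∈ B a' i' from hz'))

end Full

theorem exists_isOpen_nhds_basis (X : Type*) [TopologicalSpace X] [FirstCountableTopology X] :
    ∃ B : X → ℕ → Set X,
      (∀ x n, IsOpen (B x n)) ∧ ∀ x, (𝓝 x).HasBasis (fun _ => True) (B x) := by
  choose B hB hbasis using fun x : X => (nhds_basis_opens x).exists_antitone_subbasis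
  exact ⟨B, fun x n => (hB x n).2, fun x => (hbasis x).toHasBasis⟩

section Transfinite

variable {X : Type u}

noncomputable def transfiniteUnionRec {ι : Type*} [LT ι] [WellFoundedLT ι]
    (F : Set X → Set X) : ι → Set X :=
  WellFoundedLT.fix fun i rec => F (⋃ j, ⋃ h : j < i, rec j h)

theorem transfiniteUnionRec_eq {ι : Type*} [LT ι] [WellFoundedLT ι]
    (F : Set X → Set X) (i : ι) :
    transfiniteUnionRec F i = F (⋃ j < i, transfiniteUnionRec F j) := by
  rw [transfiniteUnionRec, WellFoundedLT.fix_eq]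

theorem countable_Iio_ord_aleph_one (i : (ℵ₁ : Cardinal.{u}).ord.ToType) : (Iio i).Countable :=
  le_aleph0_iff_set_countable.1 (lt_aleph_one_iff.1 (by simpa using mk_Iio_lt i))

theorem Set.Countable.exists_forall_lt_ord_aleph_one {s : Set (ℵ₁ : Cardinal.{u}).ord.ToType}
    (hs : s.Countable) : ∃ i, ∀ j ∈ s, j < i := by
  by_contra! h
  have hcof := Order.cof_le (s := s) h
  rw [Ordinal.cof_toType, isRegular_aleph_one.cof_ord] at hcof
  exact aleph0_lt_aleph_one.not_ge (hcof.trans hs.le_aleph0)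

theorem countable_transfiniteUnionRec {F : Set X → Set X}
    (hF : ∀ A, A.Countable → (F A).Countable) (i : (ℵ₁ : Cardinal.{u}).ord.ToType) :
    (transfiniteUnionRec F i).Countable := by
  induction i using WellFoundedLT.induction with
  | ind i ih =>
    rw [transfiniteUnionRec_eq]
    exact hF _ ((countable_Iio_ord_aleph_one i).biUnion ih)

theorem mk_iUnion_le_aleph_one {s : (ℵ₁ : Cardinal.{u}).ord.ToType → Set X}
    (hs : ∀ i, (s i).Countable) : #(⋃ i, s i) ≤ ℵ₁ := by
  refine (mk_iUnion_le s).trans ?_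
  rw [mk_ord_toType]
  calc ℵ₁ * ⨆ i, #(s i) ≤ ℵ₁ * ℵ₀ := by
        gcongr
        exact ciSup_le' fun i => (hs i).le_aleph0
    _ = ℵ₁ := mul_aleph0_eq aleph0_lt_aleph_one.le

variable [TopologicalSpace X] [FirstCountableTopology X]

theorem exists_subset_closure_biUnion_lt {s : (ℵ₁ : Cardinal.{u}).ord.ToType → Set X}
    {t : Set X} (ht : t.Countable) (hts : t ⊆ closure (⋃ i, s i)) :
    ∃ i, t ⊆ closure (⋃ j < i, s j) := by
  have hseq : ∀ x : t, ∃ v : ℕ → X, ∃ k : ℕ → (ℵ₁ : Cardinal.{u}).ord.ToType,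
      (∀ n, v n ∈ s (k n)) ∧ Tendsto v atTop (𝓝 x) := fun x => by
    obtain ⟨v, hv, hlim⟩ := mem_closure_iff_seq_limit.1 (hts x.2)
    choose k hk using fun n => mem_iUnion.1 (hv n)
    exact ⟨v, k, hk, hlim⟩
  choose v k hk hlim using hseq
  have := ht.to_subtype
  obtain ⟨i, hi⟩ :=
    (countable_range fun p : t × ℕ => k p.1 p.2).exists_forall_lt_ord_aleph_one
  refine ⟨i, fun x hx =>
    mem_closure_of_tendsto (hlim ⟨x, hx⟩) (Eventually.of_forall fun n => ?_)⟩
  exact mem_biUnion (hi _ ⟨(⟨x, hx⟩, n), rfl⟩) (hk _ n)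

theorem not_separableSpace_closure_iUnion {s : (ℵ₁ : Cardinal.{u}).ord.ToType → Set X}
    (hs : ∀ i, ∃ x ∈ s i, x ∉ closure (⋃ j < i, s j)) :
    ¬ SeparableSpace (closure (⋃ i, s i)) := by
  rintro ⟨E, hEc, hEd⟩
  obtain ⟨i, hi⟩ := exists_subset_closure_biUnion_lt (hEc.image Subtype.val)
    (image_subset_iff.2 fun y _ => y.2)
  obtain ⟨x, hxs, hx⟩ := hs i
  have hxE : x ∈ closure (Subtype.val '' E) :=
    IsInducing.subtypeVal.dense_iff.1 hEd ⟨x, subset_closure (mem_iUnion_of_mem i hxs)⟩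
  exact hx (closure_minimal hi isClosed_closure hxE)

end Transfinite

theorem exists_isClosed_ccc_densityAleph1 {X : Type u} [TopologicalSpace X]
    [FirstCountableTopology X] (hns : ¬ SeparableSpace X) (hX : CCC X) :
    ∃ Y : Set X, IsClosed Y ∧ CCC Y ∧ DensityAleph1 Y := by
  obtain ⟨B, hBo, hB⟩ := exists_isOpen_nhds_basis X
  have hstep : ∀ A : Set X, A.Countable →
      ∃ A', A ⊆ A' ∧ A'.Countable ∧ IsFull B A' ∧ ∃ x ∈ A', x ∉ closure A := by
    intro A hA
    obtain ⟨x, hx⟩ : ∃ x, x ∉ closure A := by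
      by_contra! h
      exact hns ⟨A, hA, h⟩
    obtain ⟨A', hsub, hc, hfull⟩ := exists_isFull_countable_superset B (hA.insert x)
    exact ⟨A', (subset_insert _ _).trans hsub, hc, hfull, x, hsub (mem_insert _ _), hx⟩
  choose! F hAF hFc hFfull hFout using hstep
  let s := transfiniteUnionRec (ι := (ℵ₁ : Cardinal.{u}).ord.ToType) F
  have hs : ∀ i, s i = F (⋃ j < i, s j) := transfiniteUnionRec_eq F
  have hsc : ∀ i, (s i).Countable := countable_transfiniteUnionRec hFc
  have hbelow : ∀ i, (⋃ j < i, s j).Countable := fun i =>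
    (countable_Iio_ord_aleph_one i).biUnion fun j _ => hsc j
  have hmono : Monotone s := monotone_iff_forall_lt.2 fun j i hji => by
    have hj : s j ⊆ ⋃ k < i, s k := subset_biUnion_of_mem (u := s) (mem_Iio.2 hji)
    rw [hs i]
    exact hj.trans (hAF _ (hbelow i))
  refine ⟨closure (⋃ i, s i), isClosed_closure, ?_, ?_⟩
  · refine (isFull_iUnion B hmono.directed_le fun i => ?_).ccc_closure B hX hBo hB
    rw [hs i]
    exact hFfull _ (hbelow i)
  · refine DensityAleph1.of_subset_closure subset_closure subset_rfl
      (mk_iUnion_le_aleph_one hsc) (not_separableSpace_closure_iUnion fun i => ?_)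
    rw [hs i]
    exact hFout _ (hbelow i)

section NowhereSeparable

variable {W : Type*} [TopologicalSpace W]

theorem exists_maximal_pairwiseDisjoint {α : Type*} (p : Set α → Prop) :
    ∃ M : Set (Set α), (∀ U ∈ M, p U) ∧ M.PairwiseDisjoint id ∧
      ∀ U, p U → (∀ V ∈ M, Disjoint U V) → U ∈ M := by
  obtain ⟨M, hM⟩ :=
    zorn_subset {M : Set (Set α) | (∀ U ∈ M, p U) ∧ M.PairwiseDisjoint id} fun c hc hchain =>
      ⟨⋃₀ c, ⟨fun U ⟨N, hN, hU⟩ => (hc hN).1 U hU,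
        (pairwiseDisjoint_sUnion hchain.directedOn).2 fun N hN => (hc hN).2⟩,
        fun _ => subset_sUnion_of_mem⟩
  refine ⟨M, hM.1.1, hM.1.2, fun U hU hdisj => hM.mem_of_prop_insert ⟨?_, ?_⟩⟩
  · exact forall_mem_insert.2 ⟨hU, hM.1.1⟩
  · exact hM.1.2.insert fun V hV _ => hdisj V hV

theorem CCC.exists_nonempty_isOpen_forall_not_isSeparable (hW : CCC W)
    (hns : ¬ SeparableSpace W) :
    ∃ G : Set W, IsOpen G ∧ G.Nonempty ∧
      ∀ U ⊆ G, IsOpen U → U.Nonempty → ¬ IsSeparable U := by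
  obtain ⟨M, hM, hMd, hMmax⟩ :=
    exists_maximal_pairwiseDisjoint fun U : Set W => IsOpen U ∧ U.Nonempty ∧ IsSeparable U
  have hMc : M.Countable := hW M (fun U hU => ⟨(hM U hU).1, (hM U hU).2.1⟩) hMd
  have hsep : IsSeparable (⋃₀ M) := by
    have := hMc.to_subtype
    rw [sUnion_eq_iUnion]
    exact isSeparable_iUnion.2 fun U => (hM U U.2).2.2
  refine ⟨(closure (⋃₀ M))ᶜ, isClosed_closure.isOpen_compl, ?_, ?_⟩
  · refine nonempty_compl.2 fun h => hns (isSeparable_univ_iff.1 ?_)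
    exact h ▸ isSeparable_closure.2 hsep
  · intro U hUG hU hne hUsep
    have hUM : U ∈ M := hMmax U ⟨hU, hne, hUsep⟩ fun V hV =>
      (subset_compl_iff_disjoint_right.1 hUG).mono_right
        ((subset_sUnion_of_mem hV).trans subset_closure)
    obtain ⟨x, hx⟩ := hne
    exact hUG hx (subset_closure (subset_sUnion_of_mem hUM hx))

theorem CCC.exists_regular_closed_nowhere_separable (hW : CCC W) (hd : DensityAleph1 W) :
    ∃ Z : Set W, IsClosed Z ∧ Z = closure (interior Z) ∧
      (∀ U : Set W, IsOpen U → (U ∩ Z).Nonempty → ¬ IsSeparable (U ∩ Z)) ∧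
      CCC Z ∧ DensityAleph1 Z := by
  obtain ⟨⟨E, hEd, hEc⟩, hns⟩ := hd
  obtain ⟨G, hGo, hGne, hG⟩ := hW.exists_nonempty_isOpen_forall_not_isSeparable
    fun ⟨E, hEc, hEd⟩ => hns E hEd hEc
  have hnowhere : ∀ U : Set W, IsOpen U → (U ∩ closure G).Nonempty →
      ¬ IsSeparable (U ∩ closure G) := fun U hU hne hsep =>
    hG (U ∩ G) inter_subset_right (hU.inter hGo)
      (closure_nonempty_iff.1 (hne.mono hU.inter_closure))
      (hsep.mono (inter_subset_inter_right U subset_closure))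
  refine ⟨closure G, isClosed_closure,
    (closure_mono hGo.subset_interior_closure).antisymm isClosed_closure.closure_interior_subset,
    hnowhere, hGo.ccc_closure hW, ?_⟩
  refine DensityAleph1.of_subset_closure (T := G ∩ E) (inter_subset_left.trans subset_closure)
    (closure_minimal (hEd.open_subset_closure_inter hGo) isClosed_closure)
    ((mk_le_mk_of_subset inter_subset_right).trans hEc) fun _ => ?_
  refine hnowhere univ isOpen_univ ?_ ?_
  · rw [univ_inter]
    exact closure_nonempty_iff.2 hGne
  · rw [univ_inter]
    exact IsSeparable.of_subtype _

end NowhereSeparable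

/-- Every first countable, non-separable, CCC space has a closed CCC subspace `Y`
of density exactly ω₁ (so with no countable dense subset), and `Y` in turn has a
regular closed subspace `Z` that is nowhere separable, CCC, and of density ω₁. -/
theorem exists_closed_ccc_density_omega1 {X : Type*} [TopologicalSpace X]
    [FirstCountableTopology X] (hns : ¬ SeparableSpace X) (hccc : CCC X) :
    ∃ Y : Set X, IsClosed Y ∧ CCC ↥Y ∧ DensityAleph1 ↥Y ∧
      ∃ Z : Set ↥Y, IsClosed Z ∧ Z = closure (interior Z) ∧
        (∀ U : Set ↥Y, IsOpen U → (U ∩ Z).Nonempty → ¬ IsSeparable (U ∩ Z)) ∧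
        CCC ↥Z ∧ DensityAleph1 ↥Z := by
  obtain ⟨Y, hYc, hYccc, hYd⟩ := exists_isClosed_ccc_densityAleph1 hns hccc
  exact ⟨Y, hYc, hYccc, hYd, hYccc.exists_regular_closed_nowhere_separable hYd⟩
end

section
/- Let X be a Tychonoff, first countable, nowhere separable, σ-compact, non-compact space with a remote point p ∈ βX \ X. Then the subspace Y = X ∪ {p} of βX is σ-compact, the closure in Y of every discrete subset of Y is first countable, but Y is not countably tight at p (in particular Y is not countably tight, provided p is in the closure of X). -/
open Set Topology TopologicalSpace unitInterval

theorem isEmbedding_stoneCechUnit' {X : Type*} [TopologicalSpace X] [T35Space X] :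
    Topology.IsEmbedding (stoneCechUnit : X → StoneCech X) := by
  refine ⟨Topology.isInducing_iff_nhds.mpr fun x => le_antisymm
    (continuous_stoneCechUnit.continuousAt (x := x)).le_comap ?_, injective_stoneCechUnit_of_t35Space⟩
  intro U hU
  obtain ⟨U', hU'U, hU'o, hxU'⟩ := mem_nhds_iff.mp hU
  obtain ⟨f, fc, fx, fK⟩ := CompletelyRegularSpace.completely_regular x U'ᶜ hU'o.isClosed_compl
    (by simpa using hxU')
  have hext := stoneCechExtend_extends fc
  refine Filter.mem_comap.mpr ⟨(stoneCechExtend fc) ⁻¹' {1}ᶜ, ?_, ?_⟩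
  · refine IsOpen.mem_nhds ((isClosed_singleton.preimage (continuous_stoneCechExtend fc)).isOpen_compl) ?_
    have : stoneCechExtend fc (stoneCechUnit x) = f x := congrFun hext x
    simp only [Set.mem_preimage, Set.mem_compl_iff, Set.mem_singleton_iff, this, fx]
    exact zero_ne_one
  · intro y hy
    simp only [Set.mem_preimage, Set.mem_compl_iff, Set.mem_singleton_iff] at hy
    rw [show stoneCechExtend fc (stoneCechUnit y) = f y from congrFun hext y] at hy
    by_contra hyU
    exact hy (fK (fun h => hyU (hU'U h)) : f y = 1)

/-- Let `X` be a Tychonoff, first countable, nowhere separable, σ-compact and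
non-compact space with a remote point `p ∈ βX \ X`. Then the subspace
`Y = X ∪ {p}` of `βX` is σ-compact, the closure in `Y` of every discrete subset of
`Y` is first countable, and `Y` is not countably tight at `p`: `p` lies in the
closure of a set `A ⊆ Y` but of no countable subset of `A`; in particular `Y` is
not countably tight. -/
theorem remote_point_extension_not_countably_tight {X : Type*} [TopologicalSpace X]
    [T35Space X] [FirstCountableTopology X] [SigmaCompactSpace X]
    (hnc : ¬ CompactSpace X)
    (hnws : ∀ U : Set X, IsOpen U → U.Nonempty → ¬ IsSeparable U)
    (p : StoneCech X) (hp : p ∉ Set.range (stoneCechUnit : X → StoneCech X))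
    (hremote : ∀ A : Set X, IsNowhereDense A → p ∉ closure (stoneCechUnit '' A))
    (Y : Set (StoneCech X))
    (hY : Y = Set.range (stoneCechUnit : X → StoneCech X) ∪ {p})
    (pY : ↥Y) (hpY : (pY : StoneCech X) = p) :
    SigmaCompactSpace ↥Y ∧
    (∀ D : Set ↥Y, DiscreteTopology ↥D → FirstCountableTopology ↥(closure D)) ∧
    (∃ A : Set ↥Y, pY ∈ closure A ∧
      ∀ C : Set ↥Y, C ⊆ A → C.Countable → pY ∉ closure C) ∧
    ¬ CountablyTight ↥Y := by
  have hemb : Topology.IsEmbedding (stoneCechUnit : X → StoneCech X) := isEmbedding_stoneCechUnit'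
  have hinj := hemb.injective
  set e : X → StoneCech X := stoneCechUnit with he
  -- countable subsets of X are nowhere dense
  have hcnd : ∀ C : Set X, C.Countable → IsNowhereDense C := by
    intro C hC
    rw [IsNowhereDense, ← not_nonempty_iff_eq_empty]
    rintro ⟨x, hx⟩
    exact hnws _ isOpen_interior ⟨x, hx⟩
      ⟨C, hC, interior_subset.trans subset_rfl⟩
  -- relatively discrete subsets of X are nowhere dense
  have hdnd : ∀ D : Set X, (∀ d ∈ D, ∃ V, IsOpen V ∧ d ∈ V ∧ V ∩ D ⊆ {d}) →
      IsNowhereDense D := by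
    intro D hdisc
    rw [IsNowhereDense, ← not_nonempty_iff_eq_empty]
    rintro ⟨x, hx⟩
    have hxc : x ∈ closure D := interior_subset hx
    obtain ⟨d, hdU, hdD⟩ :=
      mem_closure_iff.mp hxc _ isOpen_interior hx
    obtain ⟨V, hVo, hdV, hVD⟩ := hdisc d hdD
    have hWo : IsOpen (interior (closure D) ∩ V) := isOpen_interior.inter hVo
    have hWsub : interior (closure D) ∩ V ⊆ {d} := by
      intro w hw
      have : w ∈ closure ((interior (closure D) ∩ V) ∩ D) :=
        hWo.inter_closure ⟨hw, interior_subset hw.1⟩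
      have hsub : (interior (closure D) ∩ V) ∩ D ⊆ {d} := fun z hz => hVD ⟨hz.1.2, hz.2⟩
      have := closure_mono hsub this
      rwa [closure_singleton] at this
    exact hnws _ hWo ⟨d, hdU, hdV⟩
      ⟨{d}, countable_singleton d, hWsub.trans subset_closure⟩
  have hYsub : range e ⊆ Y := hY ▸ subset_union_left
  have hpne : ∀ y : ↥Y, (y : StoneCech X) ≠ p → (y : StoneCech X) ∈ range e := by
    intro y hy
    rcases hY.subset y.2 with h | h
    · exact h
    · exact absurd h hy
  -- Part 3
  have claim3 : ∃ A : Set ↥Y, pY ∈ closure A ∧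
      ∀ C : Set ↥Y, C ⊆ A → C.Countable → pY ∉ closure C := by
    refine ⟨Subtype.val ⁻¹' (range e), ?_, ?_⟩
    · rw [closure_subtype]
      have himg : (Subtype.val '' (Subtype.val ⁻¹' (range e) : Set ↥Y)) = range e := by
        rw [Subtype.image_preimage_coe]
        exact inter_eq_right.mpr hYsub
      rw [himg, denseRange_stoneCechUnit.closure_range]
      trivial
    · intro C hCA hCc hmem
      rw [closure_subtype, hpY] at hmem
      set C₀ : Set X := e ⁻¹' (Subtype.val '' C) with hC₀
      have hCsub : Subtype.val '' C ⊆ range e := by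
        rintro _ ⟨c, hc, rfl⟩
        exact hCA hc
      have himg : e '' C₀ = Subtype.val '' C := image_preimage_eq_of_subset hCsub
      have hC₀c : C₀.Countable := (hCc.image _).preimage hinj
      exact hremote C₀ (hcnd C₀ hC₀c) (himg ▸ hmem)
  -- Part 1
  have claim1 : SigmaCompactSpace ↥Y := by
    rw [← isSigmaCompact_univ_iff, ← isSigmaCompact_iff_isSigmaCompact_univ]
    refine ⟨fun n => e '' compactCovering X n ∪ {p}, fun n =>
      ((isCompact_compactCovering X n).image continuous_stoneCechUnit).union
        isCompact_singleton, ?_⟩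
    rw [iUnion_union_distrib, ← image_iUnion, iUnion_compactCovering, image_univ,
      iUnion_const, hY]
  -- first countability of Y off p
  have hne : ∀ y : ↥Y, (y : StoneCech X) ≠ p → (𝓝 y).IsCountablyGenerated := by
    intro y hy
    obtain ⟨x, hx⟩ := hpne y hy
    have key : ∀ q : StoneCech X, q ≠ p → 𝓝 q ⊓ Filter.principal Y =
        𝓝 q ⊓ Filter.principal (range e) := by
      intro q hq
      rw [hY]
      show 𝓝[range e ∪ {p}] q = 𝓝[range e] q
      rw [nhdsWithin_union]
      have : 𝓝[{p}] q = ⊥ := by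
        rw [nhdsWithin, Filter.inf_principal_eq_bot]
        exact (isClosed_singleton.isOpen_compl).mem_nhds (by simpa using hq)
      rw [this, sup_bot_eq]
    have h1 : 𝓝 y = Filter.comap Subtype.val (Filter.map e (𝓝 x)) := by
      rw [nhds_induced, ← Filter.comap_inf_principal_range, Subtype.range_coe,
        hemb.map_nhds_eq, hx]
      exact congrArg _ (key _ hy)
    rw [h1]
    infer_instance
  -- Part 2
  have claim2 : ∀ D : Set ↥Y, DiscreteTopology ↥D →
      FirstCountableTopology ↥(closure D) := by
    intro D hD
    constructor
    intro z
    by_cases hz : ((z : ↥Y) : StoneCech X) = p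
    · -- p is isolated in closure D
      -- the trace of D on X
      set S : Set (StoneCech X) := Subtype.val '' (D \ {pY}) with hS
      have hSsub : S ⊆ range e := by
        rintro _ ⟨d, hd, rfl⟩
        refine hpne d fun hdp => hd.2 ?_
        simp only [mem_singleton_iff]
        exact Subtype.ext (hdp.trans hpY.symm)
      set D₀ : Set X := e ⁻¹' S with hD₀
      have himg : e '' D₀ = S := image_preimage_eq_of_subset hSsub
      -- D₀ is relatively discrete in X
      have hdisc : ∀ d ∈ D₀, ∃ V, IsOpen V ∧ d ∈ V ∧ V ∩ D₀ ⊆ {d} := by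
        intro d hd
        obtain ⟨yd, hydD, hyde⟩ := hd
        -- {yd} is open in D
        have hopen : IsOpen ({⟨yd, hydD.1⟩} : Set ↥D) := isOpen_discrete _
        obtain ⟨W, hWo, hWpre⟩ := isOpen_induced_iff.mp hopen
        obtain ⟨V, hVo, hVpre⟩ := isOpen_induced_iff.mp hWo
        refine ⟨e ⁻¹' V, hVo.preimage continuous_stoneCechUnit, ?_, ?_⟩
        · show e d ∈ V
          have h2 : (⟨yd, hydD.1⟩ : ↥D) ∈ Subtype.val ⁻¹' W := by
            rw [hWpre]; rfl
          have hydW : (yd : ↥Y) ∈ W := h2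
          rw [← hVpre] at hydW
          rw [← hyde]
          exact hydW
        · rintro d' ⟨hd'V, hd'D₀⟩
          obtain ⟨yd', hyd'D, hyd'e⟩ := hd'D₀
          have hyd'W : (yd' : ↥Y) ∈ Subtype.val ⁻¹' V := by
            show (yd' : StoneCech X) ∈ V
            rw [hyd'e]; exact hd'V
          rw [hVpre] at hyd'W
          have : (⟨yd', hyd'D.1⟩ : ↥D) ∈ Subtype.val ⁻¹' W := hyd'W
          rw [hWpre] at this
          have heq : yd' = yd := congrArg Subtype.val (mem_singleton_iff.mp this)
          apply hinj
          rw [← hyd'e, ← hyde]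
          exact congrArg Subtype.val heq
      have hnd : IsNowhereDense D₀ := hdnd D₀ hdisc
      have hpcl : p ∉ closure S := himg ▸ hremote D₀ hnd
      -- the singleton {z} is open in closure D
      have hzopen : IsOpen ({z} : Set ↥(closure D)) := by
        have hU : IsOpen (closure S)ᶜ := isClosed_closure.isOpen_compl
        have : ({z} : Set ↥(closure D)) =
            (fun w : ↥(closure D) => ((w : ↥Y) : StoneCech X)) ⁻¹' (closure S)ᶜ := by
          ext w
          simp only [mem_singleton_iff, mem_preimage, mem_compl_iff]
          constructor
          · rintro rfl
            rw [hz]; exact hpcl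
          · intro hw
            have hwcl : ((w : ↥Y) : StoneCech X) ∈ closure (Subtype.val '' D) := by
              have := w.2
              rw [closure_subtype] at this
              exact this
            have hsub : Subtype.val '' D ⊆ S ∪ {p} := by
              rintro _ ⟨d, hd, rfl⟩
              by_cases hdp : d = pY
              · right; rw [hdp, hpY]; rfl
              · left; exact ⟨d, ⟨hd, hdp⟩, rfl⟩
            have := closure_mono hsub hwcl
            rw [closure_union, closure_singleton] at this
            rcases this with h | h
            · exact absurd h hw
            · apply Subtype.ext; apply Subtype.ext
              rw [mem_singleton_iff.mp h, hz]
        rw [this]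
        exact hU.preimage (continuous_subtype_val.comp continuous_subtype_val)
      have := (isOpen_singleton_iff_nhds_eq_pure z).mp hzopen
      rw [this]
      infer_instance
    · have : (𝓝 (z : ↥Y)).IsCountablyGenerated := hne _ hz
      rw [nhds_induced]
      exact Filter.comap.isCountablyGenerated _ _
  -- Part 4
  refine ⟨claim1, claim2, claim3, ?_⟩
  intro hct
  obtain ⟨A, hA1, hA2⟩ := claim3
  obtain ⟨C, hCA, hCc, hCcl⟩ := hct A pY hA1
  exact hA2 C hCA hCc hCcl
end
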